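/- arXiv:1303.6198 — 9 statements merged into one kernel-verified Lean document; each statement's English description precedes it below -/
import Mathlib

section
/- For a topological dynamical system (X,f) with X a compact metric space and f continuous, the following are equivalent: (1) there exists ε>0 such that for every x∈X and every neighborhood U of x there exist y∈U and n≥0 with d(fⁿ(x),fⁿ(y))>ε; (2) there exists ε>0 such that for every x∈X and every neighborhood U of x there exists y∈U with limsup_{n→∞} d(fⁿ(x),fⁿ(y))>ε; (3) there exists ε>0 such that every nonempty open U⊆X contains points x,y and there is n≥0 with d(fⁿ(x),fⁿ(y))>ε; (4) there exists ε>0 such that every nonempty open U⊆X contains points x,y with limsup_{n→∞} d(fⁿ(x),fⁿ(y))>ε. -/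
open Filter Topology

variable {X : Type*} [MetricSpace X]

/-- The limsup of the distance between the orbits of `x` and `y`. -/
noncomputable def limsupDist (f : X → X) (x y : X) : ℝ :=
  Filter.limsup (fun n : ℕ => dist (f^[n] x) (f^[n] y)) Filter.atTop

/-- The (first) Lyapunov number `L_r`. -/
noncomputable def Lr (f : X → X) : ℝ :=
  sSup {ε : ℝ | ∀ x : X, ∀ U ∈ 𝓝 x, ∃ y ∈ U, ∃ n : ℕ, ε < dist (f^[n] x) (f^[n] y)}

/-- The second Lyapunov number `L_d`. -/
noncomputable def Ld (f : X → X) : ℝ :=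
  sSup {ε : ℝ | ∀ U : Set X, IsOpen U → U.Nonempty →
    ∃ x ∈ U, ∃ y ∈ U, ∃ n : ℕ, 1 ≤ n ∧ ε < dist (f^[n] x) (f^[n] y)}

/-- The limsup version `L̄_r` of the first Lyapunov number. -/
noncomputable def Lrbar (f : X → X) : ℝ :=
  sSup {ε : ℝ | ∀ x : X, ∀ U : Set X, IsOpen U → x ∈ U →
    ∃ y ∈ U, ε < limsupDist f x y}

/-- The limsup version `L̄_d` of the second Lyapunov number. -/
noncomputable def Ldbar (f : X → X) : ℝ :=
  sSup {ε : ℝ | ∀ U : Set X, IsOpen U → U.Nonempty →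
    ∃ x ∈ U, ∃ y ∈ U, ε < limsupDist f x y}

/-- Sensitive dependence on initial conditions. -/
def Sensitive (f : X → X) : Prop :=
  ∃ ε > (0 : ℝ), ∀ x : X, ∀ U ∈ 𝓝 x, ∃ y ∈ U, ∃ n : ℕ, ε < dist (f^[n] x) (f^[n] y)

/-- Topological transitivity (some hitting time for each pair of opene sets). -/
def TopTransitive {Y : Type*} [TopologicalSpace Y] (f : Y → Y) : Prop :=
  ∀ U V : Set Y, IsOpen U → U.Nonempty → IsOpen V → V.Nonempty →
    ∃ n : ℕ, (U ∩ f^[n] ⁻¹' V).Nonempty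

/-- Topological weak mixing: the product system is topologically transitive. -/
def WeaklyMixing {Y : Type*} [TopologicalSpace Y] (f : Y → Y) : Prop :=
  TopTransitive (fun p : Y × Y => (f p.1, f p.2))

/-- A point whose forward orbit is dense. -/
def TransitivePoint (f : X → X) (x : X) : Prop :=
  Dense (Set.range fun n : ℕ => f^[n] x)

/-- A minimal set: nonempty, closed, invariant, and every orbit inside it is dense in it. -/
def IsMinimalSet (f : X → X) (M : Set X) : Prop :=
  M.Nonempty ∧ IsClosed M ∧ Set.MapsTo f M M ∧
    ∀ y ∈ M, M ⊆ closure (Set.range fun n : ℕ => f^[n] y)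

/-- A minimal point: a point lying in some minimal set. -/
def MinimalPoint (f : X → X) (x : X) : Prop :=
  ∃ M : Set X, IsMinimalSet f M ∧ x ∈ M

/-- A syndetic subset of ℤ₊ : bounded gaps. -/
def Syndetic (S : Set ℕ) : Prop :=
  ∃ N : ℕ, ∀ i : ℕ, ∃ n ∈ S, i ≤ n ∧ n ≤ i + N

/-- A thick subset of ℤ₊ : arbitrarily long runs of consecutive integers. -/
def Thick (S : Set ℕ) : Prop :=
  ∀ k : ℕ, ∃ n : ℕ, ∀ m ≤ k, n + m ∈ S

section Aux

variable [CompactSpace X]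

lemma orbitDist_bdd (f : X → X) (x y : X) :
    IsBoundedUnder (· ≤ ·) atTop (fun n : ℕ => dist (f^[n] x) (f^[n] y)) := by
  obtain ⟨C, hC⟩ := Metric.isBounded_iff.mp (isCompact_univ : IsCompact (Set.univ : Set X)).isBounded
  exact isBoundedUnder_of ⟨C, fun n => hC trivial trivial⟩

lemma orbitDist_cobdd (f : X → X) (x y : X) :
    IsCoboundedUnder (· ≤ ·) atTop (fun n : ℕ => dist (f^[n] x) (f^[n] y)) :=
  isCoboundedUnder_le_of_le atTop fun _ => dist_nonneg

/-- From limsup sensitivity we get some time with large separation. -/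
lemma exists_n_of_limsup {f : X → X} {x y : X} {ε : ℝ} (h : ε < limsupDist f x y) :
    ∃ n : ℕ, ε < dist (f^[n] x) (f^[n] y) :=
  (frequently_lt_of_lt_limsup (orbitDist_cobdd f x y) h).exists

/-- The shrinking trick: sensitivity gives arbitrarily late separation times. -/
lemma late_separation {f : X → X} (hf : Continuous f) {ε : ℝ} (hε : 0 < ε)
    (hs : ∀ x : X, ∀ U ∈ 𝓝 x, ∃ y ∈ U, ∃ n : ℕ, ε < dist (f^[n] x) (f^[n] y))
    (z : X) {V : Set X} (hV : IsOpen V) (hz : z ∈ V) (N : ℕ) :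
    ∃ y ∈ V, ∃ n : ℕ, N ≤ n ∧ ε < dist (f^[n] z) (f^[n] y) := by
  set W : Set X := V ∩ ⋂ m ∈ Finset.range N, {y | dist (f^[m] z) (f^[m] y) ≤ ε} with hW
  have hWnhds : W ∈ 𝓝 z := by
    have h1 : IsOpen (V ∩ ⋂ m ∈ Finset.range N, {y | dist (f^[m] z) (f^[m] y) < ε}) := by
      refine hV.inter (isOpen_biInter_finset fun m _ => ?_)
      exact isOpen_lt (continuous_const.dist (hf.iterate m)) continuous_const
    have h2 : z ∈ V ∩ ⋂ m ∈ Finset.range N, {y | dist (f^[m] z) (f^[m] y) < ε} := by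
      refine ⟨hz, Set.mem_iInter₂.2 fun m _ => ?_⟩
      simpa only [Set.mem_setOf_eq, dist_self] using hε
    refine mem_of_superset (h1.mem_nhds h2) ?_
    refine Set.inter_subset_inter le_rfl ?_
    exact Set.iInter₂_mono fun m _ => Set.setOf_subset_setOf.2 fun y => le_of_lt
  obtain ⟨y, hyW, n, hn⟩ := hs z W hWnhds
  refine ⟨y, hyW.1, n, ?_, hn⟩
  by_contra hlt
  push_neg at hlt
  have : dist (f^[n] z) (f^[n] y) ≤ ε := by
    have := hyW.2
    rw [Set.mem_iInter₂] at this
    exact this n (Finset.mem_range.mpr hlt)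
  exact absurd hn (not_lt.mpr this)

end Aux

/-- Equivalence of the four forms of sensitivity for a compact system. -/
theorem stmt0 [CompactSpace X] (f : X → X) (hf : Continuous f) :
    List.TFAE
      [ (∃ ε > (0 : ℝ), ∀ x : X, ∀ U ∈ 𝓝 x, ∃ y ∈ U, ∃ n : ℕ,
          ε < dist (f^[n] x) (f^[n] y)),
        (∃ ε > (0 : ℝ), ∀ x : X, ∀ U ∈ 𝓝 x, ∃ y ∈ U, ε < limsupDist f x y),
        (∃ ε > (0 : ℝ), ∀ U : Set X, IsOpen U → U.Nonempty →
          ∃ x ∈ U, ∃ y ∈ U, ∃ n : ℕ, ε < dist (f^[n] x) (f^[n] y)),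
        (∃ ε > (0 : ℝ), ∀ U : Set X, IsOpen U → U.Nonempty →
          ∃ x ∈ U, ∃ y ∈ U, ε < limsupDist f x y) ] := by
  tfae_have 2 → 1 := by
    rintro ⟨ε, hε, h⟩
    exact ⟨ε, hε, fun x U hU => by
      obtain ⟨y, hy, hl⟩ := h x U hU
      exact ⟨y, hy, exists_n_of_limsup hl⟩⟩
  tfae_have 1 → 3 := by
    rintro ⟨ε, hε, h⟩
    refine ⟨ε, hε, fun U hU ⟨x, hx⟩ => ?_⟩
    obtain ⟨y, hy, n, hn⟩ := h x U (hU.mem_nhds hx)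
    exact ⟨x, hx, y, hy, n, hn⟩
  tfae_have 3 → 1 := by
    rintro ⟨ε, hε, h⟩
    refine ⟨ε / 2, by linarith, fun x U hU => ?_⟩
    obtain ⟨V, hVU, hV, hxV⟩ := mem_nhds_iff.mp hU
    obtain ⟨a, ha, b, hb, n, hn⟩ := h V hV ⟨x, hxV⟩
    have htri : dist (f^[n] a) (f^[n] b) ≤
        dist (f^[n] x) (f^[n] a) + dist (f^[n] x) (f^[n] b) := by
      rw [dist_comm (f^[n] x) (f^[n] a)]; exact dist_triangle _ _ _
    rcases lt_or_ge (ε / 2) (dist (f^[n] x) (f^[n] a)) with hc | hc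
    · exact ⟨a, hVU ha, n, hc⟩
    · exact ⟨b, hVU hb, n, by linarith⟩
  tfae_have 2 → 4 := by
    rintro ⟨ε, hε, h⟩
    refine ⟨ε, hε, fun U hU ⟨x, hx⟩ => ?_⟩
    obtain ⟨y, hy, hl⟩ := h x U (hU.mem_nhds hx)
    exact ⟨x, hx, y, hy, hl⟩
  tfae_have 4 → 2 := by
    rintro ⟨ε, hε, h⟩
    refine ⟨ε / 3, by linarith, fun x U hU => ?_⟩
    obtain ⟨V, hVU, hV, hxV⟩ := mem_nhds_iff.mp hU
    obtain ⟨a, ha, b, hb, hl⟩ := h V hV ⟨x, hxV⟩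
    have hfreq : ∃ᶠ n in atTop, ε < dist (f^[n] a) (f^[n] b) :=
      frequently_lt_of_lt_limsup (orbitDist_cobdd f a b) hl
    have hfreq2 : (∃ᶠ n in atTop, ε / 2 < dist (f^[n] x) (f^[n] a)) ∨
        (∃ᶠ n in atTop, ε / 2 < dist (f^[n] x) (f^[n] b)) := by
      rw [← frequently_or_distrib]
      refine hfreq.mono fun n hn => ?_
      have htri : dist (f^[n] a) (f^[n] b) ≤
          dist (f^[n] x) (f^[n] a) + dist (f^[n] x) (f^[n] b) := by
        rw [dist_comm (f^[n] x) (f^[n] a)]; exact dist_triangle _ _ _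
      by_contra hc
      push_neg at hc
      linarith [hc.1, hc.2]
    rcases hfreq2 with hc | hc
    · have hle : ε / 2 ≤ limsupDist f x a :=
        le_limsup_of_frequently_le (hc.mono fun n hn => le_of_lt hn) (orbitDist_bdd f x a)
      exact ⟨a, hVU ha, by linarith⟩
    · have hle : ε / 2 ≤ limsupDist f x b :=
        le_limsup_of_frequently_le (hc.mono fun n hn => le_of_lt hn) (orbitDist_bdd f x b)
      exact ⟨b, hVU hb, by linarith⟩
  tfae_have 1 → 2 := by
    rintro ⟨ε, hε, hs⟩
    refine ⟨ε / 3, by linarith, fun x U hU => ?_⟩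
    obtain ⟨V, hVU, hV, hxV⟩ := mem_nhds_iff.mp hU
    -- step lemma
    have step : ∀ p : {W : Set X // IsOpen W ∧ W.Nonempty}, ∀ N : ℕ,
        ∃ q : {W : Set X // IsOpen W ∧ W.Nonempty}, ∃ n : ℕ,
          closure q.1 ⊆ p.1 ∧ N ≤ n ∧ ∀ z ∈ closure q.1,
            ε / 2 < dist (f^[n] x) (f^[n] z) := by
      rintro ⟨W, hWo, z₀, hz₀⟩ N
      obtain ⟨y, hyW, n, hnN, hn⟩ := late_separation hf hε hs z₀ hWo hz₀ N
      have htri : dist (f^[n] z₀) (f^[n] y) ≤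
          dist (f^[n] x) (f^[n] z₀) + dist (f^[n] x) (f^[n] y) := by
        rw [dist_comm (f^[n] x) (f^[n] z₀)]; exact dist_triangle _ _ _
      have : ∃ w ∈ W, ε / 2 < dist (f^[n] x) (f^[n] w) := by
        rcases lt_or_ge (ε / 2) (dist (f^[n] x) (f^[n] z₀)) with hc | hc
        · exact ⟨z₀, hz₀, hc⟩
        · exact ⟨y, hyW, by linarith⟩
      obtain ⟨w, hwW, hw⟩ := this
      have hOopen : IsOpen (W ∩ {z | ε / 2 < dist (f^[n] x) (f^[n] z)}) :=
        hWo.inter (isOpen_lt continuous_const (continuous_const.dist (hf.iterate n)))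
      have hwO : w ∈ W ∩ {z | ε / 2 < dist (f^[n] x) (f^[n] z)} := ⟨hwW, hw⟩
      obtain ⟨r, hr, hball⟩ := Metric.isOpen_iff.mp hOopen w hwO
      refine ⟨⟨Metric.ball w (r / 2), Metric.isOpen_ball,
        ⟨w, Metric.mem_ball_self (by linarith)⟩⟩, n, ?_, hnN, ?_⟩
      · intro z hz
        have : z ∈ Metric.closedBall w (r / 2) :=
          Metric.closure_ball_subset_closedBall hz
        have : z ∈ Metric.ball w r := by
          rw [Metric.mem_closedBall] at this
          rw [Metric.mem_ball]; linarith
        exact (hball this).1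
      · intro z hz
        have : z ∈ Metric.closedBall w (r / 2) :=
          Metric.closure_ball_subset_closedBall hz
        have : z ∈ Metric.ball w r := by
          rw [Metric.mem_closedBall] at this
          rw [Metric.mem_ball]; linarith
        exact (hball this).2
    choose F g hsub hge hd using step
    -- recursively build the nested sequence
    let S : ℕ → {W : Set X // IsOpen W ∧ W.Nonempty} × ℕ :=
      fun k => Nat.rec (⟨⟨V, hV, ⟨x, hxV⟩⟩, 0⟩)
        (fun _ p => (F p.1 (p.2 + 1), g p.1 (p.2 + 1))) k
    have hSsucc : ∀ k, S (k + 1) = (F (S k).1 ((S k).2 + 1), g (S k).1 ((S k).2 + 1)) :=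
      fun k => rfl
    have hmono : ∀ k, closure (S (k + 1)).1.1 ⊆ (S k).1.1 := fun k => hsub _ _
    have hC : ∀ k, IsCompact (closure (S (k + 1)).1.1) :=
      fun k => isClosed_closure.isCompact
    have hCne : ∀ k, (closure (S (k + 1)).1.1).Nonempty := fun k =>
      (S (k + 1)).1.2.2.mono subset_closure
    have hanti : ∀ k, closure (S (k + 1 + 1)).1.1 ⊆ closure (S (k + 1)).1.1 :=
      fun k => (hmono (k + 1)).trans subset_closure
    have hnest : ∀ j k, j ≤ k → closure (S (k + 1)).1.1 ⊆ closure (S (j + 1)).1.1 := by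
      intro j k hjk
      induction k with
      | zero => rw [Nat.le_zero.mp hjk]
      | succ k ih =>
        rcases Nat.lt_or_ge j (k + 1) with h | h
        · exact (hanti k).trans (ih (Nat.lt_succ_iff.mp h))
        · rw [Nat.le_antisymm hjk h]
    have hne : (⋂ k, closure (S (k + 1)).1.1).Nonempty := by
      apply IsCompact.nonempty_iInter_of_directed_nonempty_isCompact_isClosed
      · intro i j
        exact ⟨max i j, hnest i (max i j) (le_max_left _ _),
          hnest j (max i j) (le_max_right _ _)⟩
      · exact hCne
      · exact hC
      · exact fun k => isClosed_closure
    obtain ⟨y, hy⟩ := hne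
    have hymem : ∀ k, y ∈ closure (S (k + 1)).1.1 := Set.mem_iInter.mp hy
    have hyU : y ∈ U := hVU ((hmono 0) (hymem 0))
    -- times
    have hgek : ∀ k, (S k).2 + 1 ≤ (S (k + 1)).2 := fun k => hge _ _
    have hkle : ∀ k, k ≤ (S k).2 := by
      intro k
      induction k with
      | zero => exact Nat.zero_le _
      | succ k ih => exact le_trans (Nat.succ_le_succ ih) (hgek k)
    have hsep : ∀ k, ε / 2 < dist (f^[(S (k + 1)).2] x) (f^[(S (k + 1)).2] y) :=
      fun k => hd _ _ _ (hymem k)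
    have hfreq : ∃ᶠ n in atTop, ε / 2 ≤ dist (f^[n] x) (f^[n] y) := by
      rw [frequently_atTop]
      intro a
      exact ⟨(S (a + 1)).2, le_trans (Nat.le_succ a) (hkle (a + 1)),
        le_of_lt (hsep a)⟩
    have : ε / 2 ≤ limsupDist f x y :=
      le_limsup_of_frequently_le hfreq (orbitDist_bdd f x y)
    exact ⟨y, hyU, by linarith⟩
  tfae_finish
end

section
/- If (X,f) is a sensitive topological dynamical system on a compact metric space, then L_d ≤ 2·L̄_r; that is, the second Lyapunov number is at most twice the first limsup Lyapunov number. -/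
open Filter Topology

variable {X : Type*} [MetricSpace X]

lemma unboundedSep {f : X → X} (hf : Continuous f) {ε : ℝ} (hε : 0 < ε)
    (hA : ∀ U : Set X, IsOpen U → U.Nonempty →
      ∃ x ∈ U, ∃ y ∈ U, ∃ n : ℕ, 1 ≤ n ∧ ε < dist (f^[n] x) (f^[n] y))
    (V : Set X) (hV : IsOpen V) (hVne : V.Nonempty) (N : ℕ) :
    ∃ a ∈ V, ∃ b ∈ V, ∃ n : ℕ, N ≤ n ∧ ε < dist (f^[n] a) (f^[n] b) := by
  obtain ⟨p, hp⟩ := hVne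
  set V' := V ∩ ⋂ k ∈ Finset.range N, (f^[k]) ⁻¹' Metric.ball (f^[k] p) (ε/2) with hV'
  have hV'o : IsOpen V' := hV.inter (isOpen_biInter_finset fun k _ =>
    (Metric.isOpen_ball).preimage (hf.iterate k))
  have hpV' : p ∈ V' := ⟨hp, Set.mem_iInter₂.2 fun k _ => by
    simp [Metric.mem_ball, hε]⟩
  obtain ⟨a, ha, b, hb, n, hn1, hd⟩ := hA V' hV'o ⟨p, hpV'⟩
  refine ⟨a, ha.1, b, hb.1, n, ?_, hd⟩
  by_contra h; push_neg at h
  have haB := Set.mem_iInter₂.1 ha.2 n (Finset.mem_range.2 h)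
  have hbB := Set.mem_iInter₂.1 hb.2 n (Finset.mem_range.2 h)
  rw [Set.mem_preimage, Metric.mem_ball] at haB hbB
  have htr := dist_triangle (f^[n] a) (f^[n] p) (f^[n] b)
  rw [dist_comm (f^[n] p) (f^[n] b)] at htr
  linarith

lemma mainLem [CompactSpace X] {f : X → X} (hf : Continuous f) {ε : ℝ} (hε : 0 < ε)
    (hA : ∀ U : Set X, IsOpen U → U.Nonempty →
      ∃ x ∈ U, ∃ y ∈ U, ∃ n : ℕ, 1 ≤ n ∧ ε < dist (f^[n] x) (f^[n] y))
    (x : X) (U : Set X) (hU : IsOpen U) (hx : x ∈ U) :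
    ∃ y ∈ U, ε/2 ≤ limsupDist f x y := by
  obtain ⟨C, hC⟩ := Metric.isBounded_iff.1 (isCompact_univ (X := X)).isBounded
  have hbdd : ∀ y : X, IsBoundedUnder (· ≤ ·) atTop
      (fun n : ℕ => dist (f^[n] x) (f^[n] y)) :=
    fun y => Filter.isBoundedUnder_of ⟨C, fun n => hC (Set.mem_univ _) (Set.mem_univ _)⟩
  have rawstep : ∀ (V : Set X), IsOpen V → V.Nonempty → ∀ N : ℕ,
      ∃ W : Set X, ∃ n : ℕ, IsOpen W ∧ W.Nonempty ∧ closure W ⊆ V ∧ N ≤ n ∧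
        ∀ z ∈ closure W, ε/2 ≤ dist (f^[n] x) (f^[n] z) := by
    intro V hVo hVne N
    obtain ⟨a, ha, b, hb, n, hnN, hd⟩ := unboundedSep hf hε hA V hVo hVne N
    obtain ⟨w, hwV, hw⟩ : ∃ w ∈ V, ε/2 < dist (f^[n] x) (f^[n] w) := by
      by_contra h; push_neg at h
      have h1 := h a ha
      have h2 := h b hb
      have htr := dist_triangle (f^[n] a) (f^[n] x) (f^[n] b)
      rw [dist_comm (f^[n] a) (f^[n] x)] at htr
      linarith
    have hGo : IsOpen {z : X | ε/2 < dist (f^[n] x) (f^[n] z)} :=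
      isOpen_lt continuous_const (continuous_const.dist (hf.iterate n))
    obtain ⟨r, hr0, hsub⟩ := Metric.nhds_basis_closedBall.mem_iff.1
      ((hGo.inter hVo).mem_nhds ⟨hw, hwV⟩)
    refine ⟨Metric.ball w r, n, Metric.isOpen_ball, ⟨w, Metric.mem_ball_self hr0⟩,
      ?_, hnN, ?_⟩
    · exact (Metric.closure_ball_subset_closedBall.trans hsub).trans Set.inter_subset_right
    · intro z hz
      exact le_of_lt (hsub (Metric.closure_ball_subset_closedBall hz)).1
  have step2 : ∀ p : {q : Set X × ℕ // IsOpen q.1 ∧ q.1.Nonempty},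
      ∃ p' : {q : Set X × ℕ // IsOpen q.1 ∧ q.1.Nonempty},
        closure p'.1.1 ⊆ p.1.1 ∧ p.1.2 + 1 ≤ p'.1.2 ∧
          ∀ z ∈ closure p'.1.1, ε/2 ≤ dist (f^[p'.1.2] x) (f^[p'.1.2] z) := by
    rintro ⟨⟨V, N⟩, hVo, hVne⟩
    obtain ⟨W, n, hWo, hWne, hcl, hn, hsep⟩ := rawstep V hVo hVne (N+1)
    exact ⟨⟨(W, n), hWo, hWne⟩, hcl, hn, hsep⟩
  choose F hF1 hF2 hF3 using step2
  obtain ⟨W₀, n₀, hW₀o, hW₀ne, hW₀cl, -, -⟩ := rawstep U hU ⟨x, hx⟩ 0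
  set p₀ : {q : Set X × ℕ // IsOpen q.1 ∧ q.1.Nonempty} := ⟨(W₀, n₀), hW₀o, hW₀ne⟩ with hp₀
  set seq : ℕ → {q : Set X × ℕ // IsOpen q.1 ∧ q.1.Nonempty} := fun k => F^[k] p₀ with hseqdef
  have hseq : ∀ k, seq (k+1) = F (seq k) := fun k => Function.iterate_succ_apply' F k p₀
  set K : ℕ → Set X := fun k => closure (seq k).1.1 with hK
  set ns : ℕ → ℕ := fun k => (seq k).1.2 with hns
  have hKdec : ∀ k, K (k+1) ⊆ K k := by
    intro k
    have : closure (seq (k+1)).1.1 ⊆ (seq k).1.1 := by rw [hseq k]; exact hF1 (seq k)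
    exact this.trans subset_closure
  have hnsmono : ∀ k, ns k + 1 ≤ ns (k+1) := by
    intro k; have := hF2 (seq k); rw [← hseq k] at this; exact this
  have hnsk : ∀ k, k ≤ ns k := by
    intro k; induction k with
    | zero => exact Nat.zero_le _
    | succ k ih => exact le_trans (Nat.succ_le_succ ih) (hnsmono k)
  have hsep' : ∀ k, ∀ z ∈ K (k+1), ε/2 ≤ dist (f^[ns (k+1)] x) (f^[ns (k+1)] z) := by
    intro k; have := hF3 (seq k); rw [← hseq k] at this; exact this
  have hne : ∀ k, (K k).Nonempty := fun k => (seq k).2.2.closure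
  obtain ⟨y, hy⟩ := IsCompact.nonempty_iInter_of_sequence_nonempty_isCompact_isClosed
    K hKdec hne (isClosed_closure.isCompact) (fun _ => isClosed_closure)
  have hyk : ∀ k, y ∈ K k := Set.mem_iInter.1 hy
  refine ⟨y, ?_, ?_⟩
  · have h0 : K 0 = closure W₀ := by
      simp only [hK, hseqdef, Function.iterate_zero_apply, hp₀]
    exact hW₀cl (h0 ▸ hyk 0)
  · rw [limsupDist]
    apply Filter.le_limsup_of_frequently_le ?_ (hbdd y)
    rw [Filter.frequently_atTop]
    intro m
    exact ⟨ns (m+1), le_trans (Nat.le_succ m) (hnsk (m+1)), hsep' m y (hyk (m+1))⟩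

/-- For a sensitive system, `L_d ≤ 2 L̄_r`. -/
theorem stmt4 [CompactSpace X] (f : X → X) (hf : Continuous f) (hs : Sensitive f) :
    Ld f ≤ 2 * Lrbar f := by
  rcases isEmpty_or_nonempty X with hX | hX
  · have hA : {ε : ℝ | ∀ U : Set X, IsOpen U → U.Nonempty →
        ∃ x ∈ U, ∃ y ∈ U, ∃ n : ℕ, 1 ≤ n ∧ ε < dist (f^[n] x) (f^[n] y)} = Set.univ := by
      ext ε; simp only [Set.mem_setOf_eq, Set.mem_univ, iff_true]
      intro U _ hUne; exact (hX.false hUne.some).elim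
    have hB : {ε : ℝ | ∀ x : X, ∀ U : Set X, IsOpen U → x ∈ U →
        ∃ y ∈ U, ε < limsupDist f x y} = Set.univ := by
      ext ε; simp only [Set.mem_setOf_eq, Set.mem_univ, iff_true]
      intro x; exact hX.elim x
    rw [Ld, Lrbar, hA, hB, Real.sSup_univ]; norm_num
  · -- nonempty case
    obtain ⟨C, hC⟩ := Metric.isBounded_iff.1 (isCompact_univ (X := X)).isBounded
    set B := {ε : ℝ | ∀ x : X, ∀ U : Set X, IsOpen U → x ∈ U →
      ∃ y ∈ U, ε < limsupDist f x y} with hBdef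
    have hlimsup_le : ∀ x y : X, limsupDist f x y ≤ C := by
      intro x y
      rw [limsupDist]
      refine Filter.limsup_le_of_le ?_
        (Filter.Eventually.of_forall fun n => hC (Set.mem_univ _) (Set.mem_univ _))
      exact (Filter.isBoundedUnder_of
        ⟨0, fun n => dist_nonneg⟩ : IsBoundedUnder (· ≥ ·) atTop _).isCoboundedUnder_le
    have hBbdd : BddAbove B := by
      refine ⟨C, fun ε hε => ?_⟩
      obtain ⟨y, -, hlt⟩ := hε (Classical.arbitrary X) Set.univ isOpen_univ (Set.mem_univ _)
      exact le_trans hlt.le (hlimsup_le _ _)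
    have hneg : ∀ δ : ℝ, 0 < δ → (-δ) ∈ B := by
      intro δ hδ x U hUo hxU
      refine ⟨x, hxU, ?_⟩
      have : limsupDist f x x = 0 := by
        rw [limsupDist]
        simp only [dist_self]
        exact Filter.limsup_const 0
      rw [this]; linarith
    have h0L : 0 ≤ Lrbar f := by
      by_contra h
      push_neg at h
      have h1 : (-(-Lrbar f / 2) : ℝ) ≤ Lrbar f :=
        le_csSup hBbdd (hneg (-Lrbar f / 2) (by linarith))
      linarith
    refine Real.sSup_le ?_ (by linarith)
    intro ε hε
    rcases le_or_gt ε 0 with hε0 | hε0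
    · linarith
    · have hmain := fun x U hU hx => mainLem hf hε0 hε x U hU hx
      have hhalf : ε / 2 ≤ Lrbar f := by
        by_contra h
        push_neg at h
        set ε' := (Lrbar f + ε/2) / 2 with hε'
        have hε'B : ε' ∈ B := by
          intro x U hUo hxU
          obtain ⟨y, hyU, hy⟩ := hmain x U hUo hxU
          exact ⟨y, hyU, by linarith⟩
        have hthis := le_csSup hBbdd hε'B
        have hLB : sSup B = Lrbar f := rfl
        rw [hε', hLB] at hthis; linarith
      linarith
end

section
/- For a sensitive topological dynamical system (X,f) on a compact metric space, all four Lyapunov numbers are within a factor of two of each other: L_i ≤ 2·L_j for all i,j ∈ {1,2,3,4}, where L_1=L_r, L_2=L_d, L_3=L̄_r, L_4=L̄_d. -/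
open Filter Topology

variable {X : Type*} [MetricSpace X]

section MyAux

variable {X : Type*} [MetricSpace X]

open Filter Topology

private lemma my_le_of_forall_lt {c L : ℝ} (h : ∀ δ : ℝ, δ < c → δ ≤ L) : c ≤ L := by
  by_contra h'
  push_neg at h'
  have := h ((L + c) / 2) (by linarith)
  linarith

private lemma my_dist_bdd [CompactSpace X] : ∃ C : ℝ, 0 ≤ C ∧ ∀ x y : X, dist x y ≤ C := by
  obtain ⟨C, hC⟩ := Metric.isBounded_iff.mp (isCompact_univ (X := X)).isBounded
  exact ⟨max C 0, le_max_right _ _, fun x y =>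
    le_trans (hC (Set.mem_univ x) (Set.mem_univ y)) (le_max_left _ _)⟩

private lemma my_exists_ge_of_lt_limsup {f : X → X} {x y : X} {c : ℝ}
    (h : c < limsupDist f x y) (N : ℕ) :
    ∃ n : ℕ, N ≤ n ∧ c < dist (f^[n] x) (f^[n] y) := by
  have hfr := Filter.frequently_lt_of_lt_limsup
    (Filter.isCoboundedUnder_le_of_le _ fun n => dist_nonneg) h
  obtain ⟨n, hn, hn'⟩ := (Filter.frequently_atTop.mp hfr) N
  exact ⟨n, hn, hn'⟩

private lemma my_le_limsupDist {C : ℝ} (hC : ∀ x y : X, dist x y ≤ C) {f : X → X} {x y : X}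
    {c : ℝ} (h : ∀ N : ℕ, ∃ n : ℕ, N ≤ n ∧ c ≤ dist (f^[n] x) (f^[n] y)) :
    c ≤ limsupDist f x y :=
  Filter.le_limsup_of_frequently_le (Filter.frequently_atTop.mpr fun N => h N)
    (Filter.isBoundedUnder_of ⟨C, fun n => hC _ _⟩)

private lemma my_limsupDist_le {C : ℝ} (hC : ∀ x y : X, dist x y ≤ C) (f : X → X) (x y : X) :
    limsupDist f x y ≤ C :=
  Filter.limsup_le_of_le (Filter.isCoboundedUnder_le_of_le _ fun n => dist_nonneg)
    (Filter.Eventually.of_forall fun n => hC _ _)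

private lemma my_limsupDist_nonneg [CompactSpace X] (f : X → X) (x y : X) :
    0 ≤ limsupDist f x y := by
  obtain ⟨C, _, hC⟩ := my_dist_bdd (X := X)
  exact my_le_limsupDist hC fun N => ⟨N, le_refl N, dist_nonneg⟩

private lemma my_ld_large {f : X → X} (hf : Continuous f) {ε : ℝ} (hε : 0 < ε)
    (hLd : ∀ U : Set X, IsOpen U → U.Nonempty →
      ∃ x ∈ U, ∃ y ∈ U, ∃ n : ℕ, 1 ≤ n ∧ ε < dist (f^[n] x) (f^[n] y))
    (U : Set X) (hU : IsOpen U) (hUne : U.Nonempty) (N : ℕ) :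
    ∃ a ∈ U, ∃ b ∈ U, ∃ n : ℕ, N < n ∧ ε < dist (f^[n] a) (f^[n] b) := by
  obtain ⟨x0, hx0⟩ := hUne
  set V : Set X := U ∩ ⋂ k ∈ Finset.range (N + 1), f^[k] ⁻¹' Metric.ball (f^[k] x0) (ε / 2)
    with hV
  have hVopen : IsOpen V := hU.inter (isOpen_biInter_finset fun k _ =>
    (Metric.isOpen_ball).preimage (hf.iterate k))
  have hx0V : x0 ∈ V := by
    refine ⟨hx0, Set.mem_biInter fun k _ => ?_⟩
    simp [Metric.mem_ball, hε]
  obtain ⟨a, ha, b, hb, n, hn1, hnd⟩ := hLd V hVopen ⟨x0, hx0V⟩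
  refine ⟨a, ha.1, b, hb.1, n, ?_, hnd⟩
  by_contra hle
  push_neg at hle
  have hmem : n ∈ Finset.range (N + 1) := Finset.mem_range.mpr (Nat.lt_succ_of_le hle)
  have hka : dist (f^[n] a) (f^[n] x0) < ε / 2 := by
    have h2 := ha.2
    rw [Set.mem_iInter₂] at h2
    have := h2 n hmem
    simpa [Metric.mem_ball, dist_comm] using this
  have hkb : dist (f^[n] b) (f^[n] x0) < ε / 2 := by
    have h2 := hb.2
    rw [Set.mem_iInter₂] at h2
    have := h2 n hmem
    simpa [Metric.mem_ball, dist_comm] using this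
  have ht := dist_triangle (f^[n] a) (f^[n] x0) (f^[n] b)
  have h2 : dist (f^[n] x0) (f^[n] b) = dist (f^[n] b) (f^[n] x0) := dist_comm _ _
  linarith

private lemma my_step {f : X → X} (hf : Continuous f) {ε : ℝ} (hε : 0 < ε)
    (hLd : ∀ U : Set X, IsOpen U → U.Nonempty →
      ∃ x ∈ U, ∃ y ∈ U, ∃ n : ℕ, 1 ≤ n ∧ ε < dist (f^[n] x) (f^[n] y))
    (x : X) (A : Set X) (hAcl : IsClosed A) (hAint : (interior A).Nonempty) (N : ℕ) :
    ∃ B : Set X, ∃ M : ℕ, IsClosed B ∧ (interior B).Nonempty ∧ B ⊆ A ∧ N < M ∧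
      ∀ a ∈ B, ε / 2 < dist (f^[M] a) (f^[M] x) := by
  obtain ⟨a, ha, b, hb, n, hnN, hnd⟩ :=
    my_ld_large hf hε hLd (interior A) isOpen_interior hAint N
  have key : ε / 2 < dist (f^[n] a) (f^[n] x) ∨ ε / 2 < dist (f^[n] b) (f^[n] x) := by
    by_contra hcon
    push_neg at hcon
    have ht := dist_triangle (f^[n] a) (f^[n] x) (f^[n] b)
    have h2 : dist (f^[n] x) (f^[n] b) = dist (f^[n] b) (f^[n] x) := dist_comm _ _
    linarith [hcon.1, hcon.2]
  obtain ⟨w, hwA, hw⟩ : ∃ w, w ∈ interior A ∧ ε / 2 < dist (f^[n] w) (f^[n] x) := by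
    rcases key with h | h
    exacts [⟨a, ha, h⟩, ⟨b, hb, h⟩]
  have hWopen : IsOpen (interior A ∩ {z | ε / 2 < dist (f^[n] z) (f^[n] x)}) :=
    isOpen_interior.inter (isOpen_lt continuous_const ((hf.iterate n).dist continuous_const))
  obtain ⟨r, hr, hball⟩ := Metric.isOpen_iff.mp hWopen w ⟨hwA, hw⟩
  have hsub : Metric.closedBall w (r / 2) ⊆
      interior A ∩ {z | ε / 2 < dist (f^[n] z) (f^[n] x)} := fun z hz =>
    hball (Metric.mem_ball.mpr (lt_of_le_of_lt (Metric.mem_closedBall.mp hz) (by linarith)))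
  refine ⟨Metric.closedBall w (r / 2), n, Metric.isClosed_closedBall, ?_, ?_, hnN, ?_⟩
  · exact ⟨w, mem_interior_iff_mem_nhds.mpr (Metric.closedBall_mem_nhds w (by linarith))⟩
  · exact fun z hz => interior_subset (hsub hz).1
  · exact fun z hz => (hsub hz).2

private lemma my_main [CompactSpace X] {f : X → X} (hf : Continuous f) {ε : ℝ} (hε : 0 < ε)
    (hLd : ∀ U : Set X, IsOpen U → U.Nonempty →
      ∃ x ∈ U, ∃ y ∈ U, ∃ n : ℕ, 1 ≤ n ∧ ε < dist (f^[n] x) (f^[n] y))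
    (x : X) (U : Set X) (hU : IsOpen U) (hx : x ∈ U) :
    ∃ y ∈ U, ε / 2 ≤ limsupDist f x y := by
  obtain ⟨C, hC0, hC⟩ := my_dist_bdd (X := X)
  obtain ⟨r, hr, hball⟩ := Metric.isOpen_iff.mp hU x hx
  have hstep : ∀ t : {p : Set X × ℕ // IsClosed p.1 ∧ (interior p.1).Nonempty},
      ∃ t' : {p : Set X × ℕ // IsClosed p.1 ∧ (interior p.1).Nonempty},
        t'.1.1 ⊆ t.1.1 ∧ t.1.2 < t'.1.2 ∧
        ∀ a ∈ t'.1.1, ε / 2 < dist (f^[t'.1.2] a) (f^[t'.1.2] x) := by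
    rintro ⟨⟨A, N⟩, hAcl, hAint⟩
    obtain ⟨B, M, h1, h2, h3, h4, h5⟩ := my_step hf hε hLd x A hAcl hAint N
    exact ⟨⟨⟨B, M⟩, h1, h2⟩, h3, h4, h5⟩
  choose next hsub hlt hfar using hstep
  have ht0 : IsClosed (Metric.closedBall x (r / 2)) ∧
      (interior (Metric.closedBall x (r / 2))).Nonempty :=
    ⟨Metric.isClosed_closedBall,
      ⟨x, mem_interior_iff_mem_nhds.mpr (Metric.closedBall_mem_nhds x (by linarith))⟩⟩
  set t0 : {p : Set X × ℕ // IsClosed p.1 ∧ (interior p.1).Nonempty} :=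
    ⟨⟨Metric.closedBall x (r / 2), 0⟩, ht0⟩ with ht0def
  set seq : ℕ → {p : Set X × ℕ // IsClosed p.1 ∧ (interior p.1).Nonempty} :=
    fun k => next^[k] t0 with hseqdef
  have hsucc : ∀ k, seq (k + 1) = next (seq k) := fun k => by
    rw [hseqdef]; exact Function.iterate_succ_apply' next k t0
  have hseq0 : seq 0 = t0 := by rw [hseqdef]; rfl
  have hAsub : ∀ k, (seq (k + 1)).1.1 ⊆ (seq k).1.1 := fun k => by
    rw [hsucc k]; exact hsub (seq k)
  have hlt' : ∀ k, (seq k).1.2 < (seq (k + 1)).1.2 := fun k => by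
    rw [hsucc k]; exact hlt (seq k)
  have hfar' : ∀ k, ∀ a ∈ (seq (k + 1)).1.1,
      ε / 2 < dist (f^[(seq (k + 1)).1.2] a) (f^[(seq (k + 1)).1.2] x) := fun k => by
    rw [hsucc k]; exact hfar (seq k)
  have hmono : StrictMono fun k => (seq k).1.2 := strictMono_nat_of_lt_succ hlt'
  have hne : ∀ k, ((seq k).1.1).Nonempty := fun k =>
    ((seq k).2.2).mono interior_subset
  have hclosed : ∀ k, IsClosed (seq k).1.1 := fun k => (seq k).2.1
  obtain ⟨y, hy⟩ := IsCompact.nonempty_iInter_of_sequence_nonempty_isCompact_isClosed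
    (fun k => (seq k).1.1) hAsub hne ((hclosed 0).isCompact) hclosed
  have hy' : ∀ k, y ∈ (seq k).1.1 := Set.mem_iInter.mp hy
  have hy0 : y ∈ Metric.closedBall x (r / 2) := by
    have := hy' 0
    rwa [hseq0] at this
  refine ⟨y, hball (Metric.mem_ball.mpr
    (lt_of_le_of_lt (Metric.mem_closedBall.mp hy0) (by linarith))), ?_⟩
  refine my_le_limsupDist hC fun N => ?_
  refine ⟨(seq (N + 1)).1.2, ?_, ?_⟩
  · exact le_trans (Nat.le_succ N) (hmono.le_apply (x := N + 1))
  · have := hfar' N y (hy' (N + 1))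
    rw [dist_comm] at this
    exact this.le

end MyAux
/-- For a sensitive system all four Lyapunov numbers are within a factor two of each other. -/
theorem stmt5 [CompactSpace X] (f : X → X) (hf : Continuous f) (hs : Sensitive f) :
    ∀ a ∈ ({Lr f, Ld f, Lrbar f, Ldbar f} : Set ℝ),
      ∀ b ∈ ({Lr f, Ld f, Lrbar f, Ldbar f} : Set ℝ), a ≤ 2 * b := by
  clear hs
  rcases isEmpty_or_nonempty X with hX | hX
  · have e1 : Lr f = 0 := by
      have h : {ε : ℝ | ∀ x : X, ∀ U ∈ 𝓝 x, ∃ y ∈ U, ∃ n : ℕ,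
          ε < dist (f^[n] x) (f^[n] y)} = Set.univ :=
        Set.eq_univ_of_forall fun ε x => (hX.false x).elim
      rw [Lr, h, Real.sSup_univ]
    have e2 : Ld f = 0 := by
      have h : {ε : ℝ | ∀ U : Set X, IsOpen U → U.Nonempty → ∃ x ∈ U, ∃ y ∈ U, ∃ n : ℕ,
          1 ≤ n ∧ ε < dist (f^[n] x) (f^[n] y)} = Set.univ :=
        Set.eq_univ_of_forall fun ε U _ hUne => (hX.false hUne.choose).elim
      rw [Ld, h, Real.sSup_univ]
    have e3 : Lrbar f = 0 := by
      have h : {ε : ℝ | ∀ x : X, ∀ U : Set X, IsOpen U → x ∈ U →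
          ∃ y ∈ U, ε < limsupDist f x y} = Set.univ :=
        Set.eq_univ_of_forall fun ε x => (hX.false x).elim
      rw [Lrbar, h, Real.sSup_univ]
    have e4 : Ldbar f = 0 := by
      have h : {ε : ℝ | ∀ U : Set X, IsOpen U → U.Nonempty →
          ∃ x ∈ U, ∃ y ∈ U, ε < limsupDist f x y} = Set.univ :=
        Set.eq_univ_of_forall fun ε U _ hUne => (hX.false hUne.choose).elim
      rw [Ldbar, h, Real.sSup_univ]
    intro a ha b hb
    simp only [Set.mem_insert_iff, Set.mem_singleton_iff] at ha hb
    rcases ha with rfl | rfl | rfl | rfl <;> rcases hb with rfl | rfl | rfl | rfl <;>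
      simp only [e1, e2, e3, e4] <;> norm_num
  · obtain ⟨C, hC0, hC⟩ := my_dist_bdd (X := X)
    obtain ⟨x⟩ := hX
    -- bounded above
    have hb1 : BddAbove {ε : ℝ | ∀ x : X, ∀ U ∈ 𝓝 x,
        ∃ y ∈ U, ∃ n : ℕ, ε < dist (f^[n] x) (f^[n] y)} := by
      refine ⟨C, fun ε hε => ?_⟩
      obtain ⟨y, _, n, hn⟩ := hε x Set.univ Filter.univ_mem
      exact (hn.trans_le (hC _ _)).le
    have hb2 : BddAbove {ε : ℝ | ∀ U : Set X, IsOpen U → U.Nonempty →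
        ∃ x ∈ U, ∃ y ∈ U, ∃ n : ℕ, 1 ≤ n ∧ ε < dist (f^[n] x) (f^[n] y)} := by
      refine ⟨C, fun ε hε => ?_⟩
      obtain ⟨a, _, b, _, n, _, hn⟩ := hε Set.univ isOpen_univ ⟨x, trivial⟩
      exact (hn.trans_le (hC _ _)).le
    have hb3 : BddAbove {ε : ℝ | ∀ x : X, ∀ U : Set X, IsOpen U → x ∈ U →
        ∃ y ∈ U, ε < limsupDist f x y} := by
      refine ⟨C, fun ε hε => ?_⟩
      obtain ⟨y, _, hn⟩ := hε x Set.univ isOpen_univ trivial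
      exact (hn.trans_le (my_limsupDist_le hC f x y)).le
    have hb4 : BddAbove {ε : ℝ | ∀ U : Set X, IsOpen U → U.Nonempty →
        ∃ x ∈ U, ∃ y ∈ U, ε < limsupDist f x y} := by
      refine ⟨C, fun ε hε => ?_⟩
      obtain ⟨a, _, b, _, hn⟩ := hε Set.univ isOpen_univ ⟨x, trivial⟩
      exact (hn.trans_le (my_limsupDist_le hC f a b)).le
    -- negative numbers belong to each set
    have hm1 : ∀ δ : ℝ, δ < 0 → δ ∈ {ε : ℝ | ∀ x : X, ∀ U ∈ 𝓝 x,
        ∃ y ∈ U, ∃ n : ℕ, ε < dist (f^[n] x) (f^[n] y)} := by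
      intro δ hδ z U hU
      exact ⟨z, mem_of_mem_nhds hU, 0, by simpa using hδ⟩
    have hm2 : ∀ δ : ℝ, δ < 0 → δ ∈ {ε : ℝ | ∀ U : Set X, IsOpen U → U.Nonempty →
        ∃ x ∈ U, ∃ y ∈ U, ∃ n : ℕ, 1 ≤ n ∧ ε < dist (f^[n] x) (f^[n] y)} := by
      intro δ hδ U _ hUne
      obtain ⟨z, hz⟩ := hUne
      exact ⟨z, hz, z, hz, 1, le_refl 1, by simpa using hδ⟩
    have hm3 : ∀ δ : ℝ, δ < 0 → δ ∈ {ε : ℝ | ∀ x : X, ∀ U : Set X, IsOpen U → x ∈ U →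
        ∃ y ∈ U, ε < limsupDist f x y} := by
      intro δ hδ z U _ hz
      exact ⟨z, hz, lt_of_lt_of_le hδ (my_limsupDist_nonneg f z z)⟩
    have hm4 : ∀ δ : ℝ, δ < 0 → δ ∈ {ε : ℝ | ∀ U : Set X, IsOpen U → U.Nonempty →
        ∃ x ∈ U, ∃ y ∈ U, ε < limsupDist f x y} := by
      intro δ hδ U _ hUne
      obtain ⟨z, hz⟩ := hUne
      exact ⟨z, hz, z, hz, lt_of_lt_of_le hδ (my_limsupDist_nonneg f z z)⟩
    -- nonnegativity
    have h01 : 0 ≤ Lr f := my_le_of_forall_lt fun δ hδ => le_csSup hb1 (hm1 δ hδ)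
    have h02 : 0 ≤ Ld f := my_le_of_forall_lt fun δ hδ => le_csSup hb2 (hm2 δ hδ)
    have h03 : 0 ≤ Lrbar f := my_le_of_forall_lt fun δ hδ => le_csSup hb3 (hm3 δ hδ)
    have h04 : 0 ≤ Ldbar f := my_le_of_forall_lt fun δ hδ => le_csSup hb4 (hm4 δ hδ)
    -- I1 : Lrbar ≤ Lr
    have i1 : Lrbar f ≤ Lr f := by
      refine Real.sSup_le (fun ε hε => le_csSup hb1 ?_) h01
      intro z U hU
      rw [mem_nhds_iff] at hU
      obtain ⟨V, hVU, hVopen, hzV⟩ := hU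
      obtain ⟨y, hyV, hlim⟩ := hε z V hVopen hzV
      obtain ⟨n, _, hn⟩ := my_exists_ge_of_lt_limsup hlim 0
      exact ⟨y, hVU hyV, n, hn⟩
    -- I2 : Lrbar ≤ Ldbar
    have i2 : Lrbar f ≤ Ldbar f := by
      refine Real.sSup_le (fun ε hε => le_csSup hb4 ?_) h04
      intro U hU hUne
      obtain ⟨z, hz⟩ := hUne
      obtain ⟨y, hy, hlim⟩ := hε z U hU hz
      exact ⟨z, hz, y, hy, hlim⟩
    -- I3 : Ldbar ≤ Ld
    have i3 : Ldbar f ≤ Ld f := by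
      refine Real.sSup_le (fun ε hε => le_csSup hb2 ?_) h02
      intro U hU hUne
      obtain ⟨a, ha, b, hb, hlim⟩ := hε U hU hUne
      obtain ⟨n, hn1, hn⟩ := my_exists_ge_of_lt_limsup hlim 1
      exact ⟨a, ha, b, hb, n, hn1, hn⟩
    -- I4 : Lr ≤ Ld
    have i4 : Lr f ≤ Ld f := by
      refine Real.sSup_le (fun ε hε => ?_) h02
      rcases le_or_gt ε 0 with hε0 | hε0
      · exact hε0.trans h02
      refine le_csSup hb2 ?_
      intro U hU hUne
      obtain ⟨z, hz⟩ := hUne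
      have hVnhds : U ∩ Metric.ball z ε ∈ 𝓝 z :=
        (hU.inter Metric.isOpen_ball).mem_nhds ⟨hz, Metric.mem_ball_self hε0⟩
      obtain ⟨y, ⟨hyU, hyB⟩, n, hn⟩ := hε z _ hVnhds
      refine ⟨z, hz, y, hyU, n, ?_, hn⟩
      rcases Nat.eq_zero_or_pos n with rfl | hpos
      · exfalso
        simp only [Function.iterate_zero_apply] at hn
        rw [Metric.mem_ball, dist_comm] at hyB
        linarith
      · exact hpos
    -- I5 : Ld ≤ 2 * Lrbar
    have i5 : Ld f ≤ 2 * Lrbar f := by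
      refine Real.sSup_le (fun ε hε => ?_) (by linarith)
      rcases le_or_gt ε 0 with hε0 | hε0
      · linarith
      have key : ε / 2 ≤ Lrbar f := by
        refine my_le_of_forall_lt fun δ hδ => le_csSup hb3 ?_
        intro z U hU hz
        obtain ⟨y, hyU, hlim⟩ := my_main hf hε0 hε z U hU hz
        exact ⟨y, hyU, lt_of_lt_of_le hδ hlim⟩
      linarith
    intro a ha b hb
    simp only [Set.mem_insert_iff, Set.mem_singleton_iff] at ha hb
    rcases ha with rfl | rfl | rfl | rfl <;> rcases hb with rfl | rfl | rfl | rfl <;> linarith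
end

section
/- If (X,f) is a sensitive topologically transitive dynamical system on a compact metric space, then L_d = L̄_d; i.e., the second Lyapunov number equals its limsup version. -/
open Filter Topology

variable {X : Type*} [MetricSpace X]

/-- Existence of a point whose orbit hits every nonempty open set at arbitrarily large times. -/
lemma exists_strong_transitive_point [CompactSpace X] [Nonempty X] (f : X → X)
    (hf : Continuous f)
    (htrans : ∀ U V : Set X, IsOpen U → U.Nonempty → IsOpen V → V.Nonempty →
      {n : ℕ | (U ∩ f^[n] ⁻¹' V).Nonempty}.Infinite) :
    ∃ z : X, ∀ W : Set X, IsOpen W → W.Nonempty → ∀ N : ℕ, ∃ n ≥ N, f^[n] z ∈ W := by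
  classical
  set B := TopologicalSpace.countableBasis X with hB
  set T : Set (Set X × ℕ) := {p | p.1 ∈ B ∧ p.1.Nonempty} with hT
  have hTc : T.Countable := by
    have : T ⊆ B ×ˢ (Set.univ : Set ℕ) := by
      rintro ⟨W, N⟩ ⟨h1, _⟩
      exact ⟨h1, trivial⟩
    exact Set.Countable.mono this
      ((TopologicalSpace.countable_countableBasis X).prod (Set.countable_univ))
  haveI : Countable ↥T := hTc.to_subtype
  set g : ↥T → Set X := fun p => ⋃ n, ⋃ (_ : p.1.2 ≤ n), f^[n] ⁻¹' p.1.1 with hg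
  have hgo : ∀ p, IsOpen (g p) := by
    intro p
    exact isOpen_iUnion fun n => isOpen_iUnion fun _ =>
      (p.2.1 |> fun h => (TopologicalSpace.isOpen_of_mem_countableBasis h).preimage
        (hf.iterate n))
  have hgd : ∀ p, Dense (g p) := by
    intro p
    rw [dense_iff_inter_open]
    intro V hVo hVne
    have hWo : IsOpen p.1.1 := TopologicalSpace.isOpen_of_mem_countableBasis p.2.1
    have hinf := htrans V p.1.1 hVo hVne hWo p.2.2
    obtain ⟨n, hn, hnlt⟩ := hinf.exists_gt p.1.2
    obtain ⟨x, hx1, hx2⟩ := hn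
    exact ⟨x, hx1, Set.mem_iUnion.2 ⟨n, Set.mem_iUnion.2 ⟨le_of_lt hnlt, hx2⟩⟩⟩
  have hdense : Dense (⋂ p, g p) := dense_iInter_of_isOpen hgo hgd
  obtain ⟨z, hz⟩ := hdense.nonempty
  refine ⟨z, fun W hWo hWne N => ?_⟩
  obtain ⟨w, hw⟩ := hWne
  obtain ⟨W', hW'B, hwW', hW'sub⟩ :=
    (TopologicalSpace.isBasis_countableBasis X).exists_subset_of_mem_open hw hWo
  have hp : (⟨(W', N), hW'B, ⟨w, hwW'⟩⟩ : ↥T) ∈ (Set.univ : Set ↥T) := trivial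
  have := Set.mem_iInter.1 hz ⟨(W', N), hW'B, ⟨w, hwW'⟩⟩
  simp only [hg, Set.mem_iUnion] at this
  obtain ⟨n, hn, hzn⟩ := this
  exact ⟨n, hn, hW'sub hzn⟩
/-- Core step: produce a pair in `U` with large `limsupDist`. -/
lemma core_pair [CompactSpace X] (f : X → X) {z u v : X} {U : Set X} {ε δ : ℝ} {η : ℝ}
    {s p q : ℕ}
    (hf : Continuous f)
    (hz : ∀ W : Set X, IsOpen W → W.Nonempty → ∀ N : ℕ, ∃ n ≥ N, f^[n] z ∈ W)
    (hballu : Metric.ball u η ⊆ U)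
    (hηu : ∀ ⦃w : X⦄, dist w u < η → dist (f^[s] w) (f^[s] u) < δ / 4)
    (hηv : ∀ ⦃w : X⦄, dist w v < η → dist (f^[s] w) (f^[s] v) < δ / 4)
    (hp : dist (f^[p] z) u < η) (hq : dist (f^[q] z) v < η) (hpq : p < q)
    (hsep : ε < dist (f^[s] u) (f^[s] v)) (hδ : 0 < δ) :
    ∃ x ∈ U, ε - δ < limsupDist f x (f^[q] z) := by
  set x := f^[p] z with hx
  set y := f^[q] z with hy
  set r := q - p with hr
  have hqpr : q = p + r := by omega
  have hxU : x ∈ U := hballu (Metric.mem_ball.2 hp)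
  -- key distances at time s
  have h1 : dist (f^[s] x) (f^[s] u) < δ / 4 := hηu hp
  have h2 : dist (f^[s] y) (f^[s] v) < δ / 4 := hηv hq
  -- f^[s] y = f^[r] (f^[s] x)
  have hkey : f^[s] y = f^[r] (f^[s] x) := by
    rw [hx, hy, ← Function.iterate_add_apply, ← Function.iterate_add_apply,
      ← Function.iterate_add_apply]
    congr 1
    omega
  set W : Set X := {c | ε - δ / 2 < dist c (f^[r] c)} with hW
  have hWo : IsOpen W := by
    have : Continuous fun c => dist c (f^[r] c) := continuous_id.dist (hf.iterate r)
    exact isOpen_lt continuous_const this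
  have hWne : (f^[s] x) ∈ W := by
    have tri : dist (f^[s] u) (f^[s] v) ≤
        dist (f^[s] u) (f^[s] x) + dist (f^[s] x) (f^[s] y) + dist (f^[s] y) (f^[s] v) :=
      dist_triangle4 _ _ _ _
    have : ε - δ / 2 < dist (f^[s] x) (f^[s] y) := by
      rw [dist_comm (f^[s] u) (f^[s] x)] at tri
      linarith
    simpa [hW, hkey] using this
  -- frequently large distances
  have hfreq : ∃ᶠ m in atTop, ε - δ / 2 ≤ dist (f^[m] x) (f^[m] y) := by
    rw [frequently_atTop]
    intro N
    obtain ⟨n, hn, hnW⟩ := hz W hWo ⟨_, hWne⟩ (N + p)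
    refine ⟨n - p, by omega, ?_⟩
    have hxm : f^[n - p] x = f^[n] z := by
      rw [hx, ← Function.iterate_add_apply]
      congr 1
      omega
    have hym : f^[n - p] y = f^[r] (f^[n] z) := by
      rw [hy, ← Function.iterate_add_apply, ← Function.iterate_add_apply]
      congr 1
      omega
    rw [hxm, hym]
    exact le_of_lt hnW
  have hbdd : IsBoundedUnder (· ≤ ·) atTop (fun m => dist (f^[m] x) (f^[m] y)) := by
    refine isBoundedUnder_of ⟨Metric.diam (Set.univ : Set X), fun m => ?_⟩
    exact Metric.dist_le_diam_of_mem (IsCompact.isBounded isCompact_univ) trivial trivial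
  have hle : ε - δ / 2 ≤ limsupDist f x y :=
    le_limsup_of_frequently_le hfreq hbdd
  exact ⟨x, hxU, lt_of_lt_of_le (by linarith) hle⟩
lemma ldbar_subset_ld [CompactSpace X] (f : X → X) {ε : ℝ}
    (h : ∀ U : Set X, IsOpen U → U.Nonempty → ∃ x ∈ U, ∃ y ∈ U, ε < limsupDist f x y) :
    ∀ U : Set X, IsOpen U → U.Nonempty →
      ∃ x ∈ U, ∃ y ∈ U, ∃ n : ℕ, 1 ≤ n ∧ ε < dist (f^[n] x) (f^[n] y) := by
  intro U hUo hUne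
  obtain ⟨x, hx, y, hy, hlt⟩ := h U hUo hUne
  have hcob : IsCoboundedUnder (· ≤ ·) atTop (fun n : ℕ => dist (f^[n] x) (f^[n] y)) :=
    isCoboundedUnder_le_of_le atTop (fun n => dist_nonneg)
  have hfreq : ∃ᶠ n in atTop, ε < dist (f^[n] x) (f^[n] y) :=
    frequently_lt_of_lt_limsup hcob hlt
  obtain ⟨n, hn1, hnlt⟩ := (frequently_atTop.1 hfreq) 1
  exact ⟨x, hx, y, hy, n, hn1, hnlt⟩

/-- The main step: from the `L_d` property at level `ε` produce the `L̄_d` property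
at level `ε - δ`. -/
lemma core_step [CompactSpace X] [Nonempty X] (f : X → X) (hf : Continuous f)
    (htrans : ∀ U V : Set X, IsOpen U → U.Nonempty → IsOpen V → V.Nonempty →
      {n : ℕ | (U ∩ f^[n] ⁻¹' V).Nonempty}.Infinite)
    {ε δ : ℝ} (hδ : 0 < δ)
    (hε : ∀ U : Set X, IsOpen U → U.Nonempty →
      ∃ x ∈ U, ∃ y ∈ U, ∃ n : ℕ, 1 ≤ n ∧ ε < dist (f^[n] x) (f^[n] y)) :
    ∀ U : Set X, IsOpen U → U.Nonempty → ∃ x ∈ U, ∃ y ∈ U, ε - δ < limsupDist f x y := by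
  intro U hUo hUne
  rcases lt_or_ge ε δ with hcase | hcase
  · -- trivial case : ε - δ < 0, take x = y
    obtain ⟨x, hx⟩ := hUne
    refine ⟨x, hx, x, hx, ?_⟩
    have : limsupDist f x x = 0 := by
      simp only [limsupDist, dist_self]
      exact limsup_const 0
    rw [this]
    linarith
  · -- main case
    obtain ⟨u, hu, v, hv, s, _, hsep⟩ := hε U hUo hUne
    have hεpos : 0 < ε := lt_of_lt_of_le hδ hcase
    have huv : u ≠ v := by
      rintro rfl
      rw [dist_self] at hsep
      linarith
    have hduv : 0 < dist u v := dist_pos.2 huv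
    -- continuity moduli
    obtain ⟨η₁, hη₁pos, hη₁⟩ := Metric.continuousAt_iff.1 ((hf.iterate s).continuousAt (x := u))
      (δ / 4) (by linarith)
    obtain ⟨η₂, hη₂pos, hη₂⟩ := Metric.continuousAt_iff.1 ((hf.iterate s).continuousAt (x := v))
      (δ / 4) (by linarith)
    obtain ⟨ηu, hηupos, hηu⟩ := Metric.isOpen_iff.1 hUo u hu
    obtain ⟨ηv, hηvpos, hηv⟩ := Metric.isOpen_iff.1 hUo v hv
    set η : ℝ := min (min η₁ η₂) (min (dist u v / 2) (min ηu ηv)) with hη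
    have hηpos : 0 < η := by positivity
    have hballu : Metric.ball u η ⊆ U :=
      Set.Subset.trans (Metric.ball_subset_ball (by
        calc η ≤ min ηu ηv := le_trans (min_le_right _ _) (min_le_right _ _)
        _ ≤ ηu := min_le_left _ _)) hηu
    have hballv : Metric.ball v η ⊆ U :=
      Set.Subset.trans (Metric.ball_subset_ball (by
        calc η ≤ min ηu ηv := le_trans (min_le_right _ _) (min_le_right _ _)
        _ ≤ ηv := min_le_right _ _)) hηv
    have hmodu : ∀ ⦃w : X⦄, dist w u < η → dist (f^[s] w) (f^[s] u) < δ / 4 := fun w hw =>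
      hη₁ (lt_of_lt_of_le hw (le_trans (min_le_left _ _) (min_le_left _ _)))
    have hmodv : ∀ ⦃w : X⦄, dist w v < η → dist (f^[s] w) (f^[s] v) < δ / 4 := fun w hw =>
      hη₂ (lt_of_lt_of_le hw (le_trans (min_le_left _ _) (min_le_right _ _)))
    have hηhalf : η ≤ dist u v / 2 := le_trans (min_le_right _ _) (min_le_left _ _)
    -- the strongly transitive point
    obtain ⟨z, hz⟩ := exists_strong_transitive_point f hf htrans
    obtain ⟨p, -, hp⟩ := hz (Metric.ball u η) Metric.isOpen_ball
      ⟨u, Metric.mem_ball_self hηpos⟩ 0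
    obtain ⟨q, -, hq⟩ := hz (Metric.ball v η) Metric.isOpen_ball
      ⟨v, Metric.mem_ball_self hηpos⟩ 0
    rw [Metric.mem_ball] at hp hq
    have hpq : p ≠ q := by
      rintro rfl
      have : dist u v ≤ dist (f^[p] z) u + dist (f^[p] z) v := by
        rw [dist_comm (f^[p] z) u]
        exact dist_triangle _ _ _
      have : dist u v < η + η := lt_of_le_of_lt this (add_lt_add hp hq)
      linarith
    rcases lt_or_gt_of_ne hpq with hlt | hgt
    · obtain ⟨x, hxU, hx⟩ := core_pair f hf hz hballu hmodu hmodv hp hq hlt hsep hδ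
      exact ⟨x, hxU, f^[q] z, hballv (Metric.mem_ball.2 hq), hx⟩
    · have hsep' : ε < dist (f^[s] v) (f^[s] u) := by rwa [dist_comm]
      obtain ⟨y, hyU, hy⟩ := core_pair f hf hz hballv hmodv hmodu hq hp hgt hsep' hδ
      refine ⟨y, hyU, f^[p] z, hballu (Metric.mem_ball.2 hp), hy⟩
/-- For a sensitive topologically transitive system, `L_d = L̄_d`. -/
theorem stmt6 [CompactSpace X] (f : X → X) (hf : Continuous f) (hs : Sensitive f)
    (htrans : ∀ U V : Set X, IsOpen U → U.Nonempty → IsOpen V → V.Nonempty →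
      {n : ℕ | (U ∩ f^[n] ⁻¹' V).Nonempty}.Infinite) :
    Ld f = Ldbar f := by
  rcases isEmpty_or_nonempty X with hemp | hne
  · -- empty space : both defining sets are all of ℝ
    have hvac : ∀ U : Set X, ¬ U.Nonempty := by
      rintro U ⟨x, -⟩
      exact (IsEmpty.false x).elim
    unfold Ld Ldbar
    congr 1
    ext ε
    constructor
    · intro _ U _ hUne
      exact (hvac U hUne).elim
    · intro _ U _ hUne
      exact (hvac U hUne).elim
  · set A : Set ℝ := {ε : ℝ | ∀ U : Set X, IsOpen U → U.Nonempty →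
      ∃ x ∈ U, ∃ y ∈ U, ∃ n : ℕ, 1 ≤ n ∧ ε < dist (f^[n] x) (f^[n] y)} with hA
    set B : Set ℝ := {ε : ℝ | ∀ U : Set X, IsOpen U → U.Nonempty →
      ∃ x ∈ U, ∃ y ∈ U, ε < limsupDist f x y} with hBdef
    have hAne : A.Nonempty := by
      refine ⟨-1, fun U hUo hUne => ?_⟩
      obtain ⟨x, hx⟩ := hUne
      exact ⟨x, hx, x, hx, 1, le_refl 1, by simpa using (by norm_num : (-1 : ℝ) < 0)⟩
    have hBne : B.Nonempty := by
      refine ⟨-1, fun U hUo hUne => ?_⟩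
      obtain ⟨x, hx⟩ := hUne
      refine ⟨x, hx, x, hx, ?_⟩
      have : limsupDist f x x = 0 := by
        simp only [limsupDist, dist_self]
        exact limsup_const 0
      rw [this]; norm_num
    set D : ℝ := Metric.diam (Set.univ : Set X) with hD
    have hdistD : ∀ x y : X, dist x y ≤ D :=
      fun x y => Metric.dist_le_diam_of_mem (IsCompact.isBounded isCompact_univ) trivial trivial
    have hAbdd : BddAbove A := by
      refine ⟨D, fun ε hε => ?_⟩
      obtain ⟨x, -, y, -, n, -, hlt⟩ := hε Set.univ isOpen_univ ⟨Classical.arbitrary X, trivial⟩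
      exact le_of_lt (lt_of_lt_of_le hlt (hdistD _ _))
    have hBbdd : BddAbove B := by
      refine ⟨D, fun ε hε => ?_⟩
      obtain ⟨x, -, y, -, hlt⟩ := hε Set.univ isOpen_univ ⟨Classical.arbitrary X, trivial⟩
      have : limsupDist f x y ≤ D := by
        refine limsup_le_of_le (isCoboundedUnder_le_of_le atTop (fun n => dist_nonneg)) ?_
        exact Eventually.of_forall fun n => hdistD _ _
      linarith
    have h1 : Ldbar f ≤ Ld f := by
      unfold Ld Ldbar
      exact csSup_le hBne fun ε hε => le_csSup hAbdd (ldbar_subset_ld f hε)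
    have h2 : Ld f ≤ Ldbar f := by
      unfold Ld Ldbar
      refine csSup_le hAne fun ε hε => ?_
      refine le_of_forall_pos_le_add fun δ hδ => ?_
      have hmem : ε - δ ∈ B := core_step f hf htrans hδ hε
      have := le_csSup hBbdd hmem
      linarith
    exact le_antisymm h2 h1
end

section
/- If (X,f) is a sensitive minimal dynamical system on a compact metric space, then L_r = L̄_r and L_d = L̄_d. -/
open Filter Topology

variable {X : Type*} [MetricSpace X]

/-- In a system where every point is transitive, every point returns near itself
at arbitrarily large times. -/
lemma aux_return (f : X → X) (hmin : ∀ x : X, TransitivePoint f x) (x : X)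
    {θ : ℝ} (hθ : 0 < θ) (T : ℕ) : ∃ t : ℕ, T ≤ t ∧ dist (f^[t] x) x < θ := by
  have hd := hmin (f^[T] x)
  obtain ⟨z, hz, hzb⟩ := hd.exists_mem_open Metric.isOpen_ball
    ⟨x, Metric.mem_ball_self hθ⟩
  obtain ⟨j, rfl⟩ := hz
  refine ⟨j + T, Nat.le_add_left _ _, ?_⟩
  have e : f^[j + T] x = f^[j] (f^[T] x) := Function.iterate_add_apply f j T x
  rw [e]
  simpa [Metric.mem_ball] using hzb

/-- Core lemma: if `x` separates from `f^[m] x` at some time `n` by more than `β`,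
then by recurrence this happens at arbitrarily large times, so the limsup distance
is at least `β`. -/
lemma aux_core [CompactSpace X] (f : X → X) (hf : Continuous f)
    (hmin : ∀ x : X, TransitivePoint f x) (x : X) (m n : ℕ) {β : ℝ}
    (hsep : β < dist (f^[n] x) (f^[n] (f^[m] x))) :
    β ≤ limsupDist f x (f^[m] x) := by
  set y := f^[m] x with hy
  set c := dist (f^[n] x) (f^[n] y) with hc
  set γ := (c - β) / 2 with hγdef
  have hγ : 0 < γ := by simp only [hγdef]; linarith
  -- continuity of the two iterates at x
  obtain ⟨θ₁, hθ₁, h₁⟩ := Metric.continuous_iff.mp (hf.iterate n) x γ hγ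
  obtain ⟨θ₂, hθ₂, h₂⟩ := Metric.continuous_iff.mp (hf.iterate (n + m)) x γ hγ
  have hθ : 0 < min θ₁ θ₂ := lt_min hθ₁ hθ₂
  -- frequently the orbits are β-separated
  have hfreq : ∃ᶠ s in (atTop : Filter ℕ), β ≤ dist (f^[s] x) (f^[s] y) := by
    rw [Filter.frequently_atTop]
    intro T
    obtain ⟨t, hTt, htθ⟩ := aux_return f hmin x hθ T
    refine ⟨n + t, le_trans hTt (Nat.le_add_left _ _), ?_⟩
    have e1 : f^[n + t] x = f^[n] (f^[t] x) := Function.iterate_add_apply f n t x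
    have e2 : f^[n + t] y = f^[n + m] (f^[t] x) := by
      rw [hy, ← Function.iterate_add_apply, ← Function.iterate_add_apply]
      congr 1
      omega
    have d1 : dist (f^[n] (f^[t] x)) (f^[n] x) < γ :=
      h₁ _ (lt_of_lt_of_le htθ (min_le_left _ _))
    have d2 : dist (f^[n + m] (f^[t] x)) (f^[n + m] x) < γ :=
      h₂ _ (lt_of_lt_of_le htθ (min_le_right _ _))
    have e3 : f^[n + m] x = f^[n] y := by
      rw [hy, ← Function.iterate_add_apply]
    rw [e1, e2]
    have htri : dist (f^[n] x) (f^[n] y) ≤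
        dist (f^[n] x) (f^[n] (f^[t] x)) + dist (f^[n] (f^[t] x)) (f^[n + m] (f^[t] x))
          + dist (f^[n + m] (f^[t] x)) (f^[n] y) :=
      dist_triangle4 _ _ _ _
    rw [← e3] at htri
    have hcomm : dist (f^[n] x) (f^[n] (f^[t] x)) = dist (f^[n] (f^[t] x)) (f^[n] x) :=
      dist_comm _ _
    rw [hcomm] at htri
    have h2γ : c - β = 2 * γ := by simp only [hγdef]; ring
    rw [hc] at h2γ
    have hlhs : dist (f^[n] x) (f^[n + m] x) = dist (f^[n] x) (f^[n] y) := by rw [e3]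
    linarith
  -- boundedness
  have hbdd : (atTop : Filter ℕ).IsBoundedUnder (· ≤ ·)
      (fun s : ℕ => dist (f^[s] x) (f^[s] y)) := by
    refine Filter.isBoundedUnder_of ⟨Metric.diam (Set.univ : Set X), fun s => ?_⟩
    exact Metric.dist_le_diam_of_mem isCompact_univ.isBounded (Set.mem_univ _)
      (Set.mem_univ _)
  exact Filter.le_limsup_of_frequently_le hfreq hbdd

/-- The hard direction for `L_r`: any `δ` below an element of the `L_r` set belongs to the
`L̄_r` set. -/
lemma aux_hardLr [CompactSpace X] (f : X → X) (hf : Continuous f)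
    (hmin : ∀ x : X, TransitivePoint f x) {ε δ : ℝ}
    (hε : ε ∈ {ε : ℝ | ∀ x : X, ∀ U ∈ 𝓝 x, ∃ y ∈ U, ∃ n : ℕ, ε < dist (f^[n] x) (f^[n] y)})
    (hδ : δ < ε) :
    δ ∈ {ε : ℝ | ∀ x : X, ∀ U : Set X, IsOpen U → x ∈ U →
      ∃ y ∈ U, ε < limsupDist f x y} := by
  intro x U hU hx
  obtain ⟨y₀, hy₀U, n, hn⟩ := hε x U (hU.mem_nhds hx)
  set c := dist (f^[n] x) (f^[n] y₀) with hc
  set β := (δ + c) / 2 with hβ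
  have hδβ : δ < β := by simp only [hβ]; linarith
  have hβc : β < c := by simp only [hβ]; linarith
  -- the open set of points whose n-th image is β-far from f^[n] x
  have hcont : Continuous fun z : X => dist (f^[n] x) (f^[n] z) :=
    continuous_const.dist (hf.iterate n)
  set W := U ∩ (fun z : X => dist (f^[n] x) (f^[n] z)) ⁻¹' Set.Ioi β with hW
  have hWopen : IsOpen W := hU.inter (isOpen_Ioi.preimage hcont)
  have hWne : W.Nonempty :=
    ⟨y₀, hy₀U, show β < dist (f^[n] x) (f^[n] y₀) from hβc⟩
  obtain ⟨z, hz, hzW⟩ := (hmin x).exists_mem_open hWopen hWne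
  obtain ⟨m, rfl⟩ := hz
  refine ⟨f^[m] x, hzW.1, lt_of_lt_of_le hδβ ?_⟩
  exact aux_core f hf hmin x m n hzW.2

/-- The hard direction for `L_d`. -/
lemma aux_hardLd [CompactSpace X] (f : X → X) (hf : Continuous f)
    (hmin : ∀ x : X, TransitivePoint f x) {ε δ : ℝ}
    (hε : ε ∈ {ε : ℝ | ∀ U : Set X, IsOpen U → U.Nonempty →
      ∃ x ∈ U, ∃ y ∈ U, ∃ n : ℕ, 1 ≤ n ∧ ε < dist (f^[n] x) (f^[n] y)})
    (hδ : δ < ε) :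
    δ ∈ {ε : ℝ | ∀ U : Set X, IsOpen U → U.Nonempty →
      ∃ x ∈ U, ∃ y ∈ U, ε < limsupDist f x y} := by
  intro U hU hUne
  obtain ⟨x₀, hx₀, y₀, hy₀, n, -, hn⟩ := hε U hU hUne
  set c := dist (f^[n] x₀) (f^[n] y₀) with hc
  set β := (δ + c) / 2 with hβ
  have hδβ : δ < β := by simp only [hβ]; linarith
  have hβc : β < c := by simp only [hβ]; linarith
  have hcont : Continuous fun z : X => dist (f^[n] x₀) (f^[n] z) :=
    continuous_const.dist (hf.iterate n)
  set W := U ∩ (fun z : X => dist (f^[n] x₀) (f^[n] z)) ⁻¹' Set.Ioi β with hW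
  have hWopen : IsOpen W := hU.inter (isOpen_Ioi.preimage hcont)
  have hWne : W.Nonempty :=
    ⟨y₀, hy₀, show β < dist (f^[n] x₀) (f^[n] y₀) from hβc⟩
  obtain ⟨z, hz, hzW⟩ := (hmin x₀).exists_mem_open hWopen hWne
  obtain ⟨m, rfl⟩ := hz
  refine ⟨x₀, hx₀, f^[m] x₀, hzW.1, lt_of_lt_of_le hδβ ?_⟩
  exact aux_core f hf hmin x₀ m n hzW.2

/-- Orbit distances are cobounded (below by 0) under `atTop`. -/
lemma aux_cobdd (f : X → X) (x y : X) :
    (atTop : Filter ℕ).IsCoboundedUnder (· ≤ ·)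
      (fun n : ℕ => dist (f^[n] x) (f^[n] y)) := by
  refine Filter.IsBoundedUnder.isCoboundedUnder_le ?_
  exact Filter.isBoundedUnder_of ⟨0, fun s => dist_nonneg⟩

/-- The easy direction for `L_r`. -/
lemma aux_easyLr (f : X → X) {ε : ℝ}
    (hε : ε ∈ {ε : ℝ | ∀ x : X, ∀ U : Set X, IsOpen U → x ∈ U →
      ∃ y ∈ U, ε < limsupDist f x y}) :
    ε ∈ {ε : ℝ | ∀ x : X, ∀ U ∈ 𝓝 x, ∃ y ∈ U, ∃ n : ℕ, ε < dist (f^[n] x) (f^[n] y)} := by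
  intro x U hU
  obtain ⟨V, hVU, hVopen, hxV⟩ := mem_nhds_iff.mp hU
  obtain ⟨y, hyV, hy⟩ := hε x V hVopen hxV
  have hfr := Filter.frequently_lt_of_lt_limsup (aux_cobdd f x y) hy
  obtain ⟨n, hn⟩ := hfr.exists
  exact ⟨y, hVU hyV, n, hn⟩

/-- The easy direction for `L_d`. -/
lemma aux_easyLd (f : X → X) {ε : ℝ}
    (hε : ε ∈ {ε : ℝ | ∀ U : Set X, IsOpen U → U.Nonempty →
      ∃ x ∈ U, ∃ y ∈ U, ε < limsupDist f x y}) :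
    ε ∈ {ε : ℝ | ∀ U : Set X, IsOpen U → U.Nonempty →
      ∃ x ∈ U, ∃ y ∈ U, ∃ n : ℕ, 1 ≤ n ∧ ε < dist (f^[n] x) (f^[n] y)} := by
  intro U hU hUne
  obtain ⟨x, hx, y, hy, hxy⟩ := hε U hU hUne
  have hfr := Filter.frequently_lt_of_lt_limsup (aux_cobdd f x y) hxy
  obtain ⟨n, hn1, hn⟩ := (Filter.frequently_atTop.mp hfr) 1
  exact ⟨x, hx, y, hy, n, hn1, hn⟩

/-- For a sensitive minimal system, `L_r = L̄_r` and `L_d = L̄_d`. -/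
theorem stmt10 [CompactSpace X] (f : X → X) (hf : Continuous f) (hs : Sensitive f)
    (hmin : ∀ x : X, TransitivePoint f x) :
    Lr f = Lrbar f ∧ Ld f = Ldbar f := by
  classical
  rcases isEmpty_or_nonempty X with hX | hX
  · -- empty space: all four defining sets are all of ℝ
    have h1 : {ε : ℝ | ∀ x : X, ∀ U ∈ 𝓝 x, ∃ y ∈ U, ∃ n : ℕ,
        ε < dist (f^[n] x) (f^[n] y)} = Set.univ := by
      ext ε; simp only [Set.mem_setOf_eq, Set.mem_univ, iff_true]
      exact fun x => isEmptyElim x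
    have h2 : {ε : ℝ | ∀ x : X, ∀ U : Set X, IsOpen U → x ∈ U →
        ∃ y ∈ U, ε < limsupDist f x y} = Set.univ := by
      ext ε; simp only [Set.mem_setOf_eq, Set.mem_univ, iff_true]
      exact fun x => isEmptyElim x
    have h3 : {ε : ℝ | ∀ U : Set X, IsOpen U → U.Nonempty →
        ∃ x ∈ U, ∃ y ∈ U, ∃ n : ℕ, 1 ≤ n ∧ ε < dist (f^[n] x) (f^[n] y)} = Set.univ := by
      ext ε; simp only [Set.mem_setOf_eq, Set.mem_univ, iff_true]
      exact fun U _ hUne => hUne.elim fun x _ => isEmptyElim x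
    have h4 : {ε : ℝ | ∀ U : Set X, IsOpen U → U.Nonempty →
        ∃ x ∈ U, ∃ y ∈ U, ε < limsupDist f x y} = Set.univ := by
      ext ε; simp only [Set.mem_setOf_eq, Set.mem_univ, iff_true]
      exact fun U _ hUne => hUne.elim fun x _ => isEmptyElim x
    constructor
    · rw [Lr, Lrbar, h1, h2]
    · rw [Ld, Ldbar, h3, h4]
  · obtain ⟨x₀⟩ := hX
    set D := Metric.diam (Set.univ : Set X) with hD
    have hdistD : ∀ a b : X, dist a b ≤ D := fun a b =>
      Metric.dist_le_diam_of_mem isCompact_univ.isBounded (Set.mem_univ _) (Set.mem_univ _)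
    -- the four sets
    set S1 := {ε : ℝ | ∀ x : X, ∀ U ∈ 𝓝 x, ∃ y ∈ U, ∃ n : ℕ,
      ε < dist (f^[n] x) (f^[n] y)} with hS1
    set S2 := {ε : ℝ | ∀ x : X, ∀ U : Set X, IsOpen U → x ∈ U →
      ∃ y ∈ U, ε < limsupDist f x y} with hS2
    set S3 := {ε : ℝ | ∀ U : Set X, IsOpen U → U.Nonempty →
      ∃ x ∈ U, ∃ y ∈ U, ∃ n : ℕ, 1 ≤ n ∧ ε < dist (f^[n] x) (f^[n] y)} with hS3
    set S4 := {ε : ℝ | ∀ U : Set X, IsOpen U → U.Nonempty →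
      ∃ x ∈ U, ∃ y ∈ U, ε < limsupDist f x y} with hS4
    have hB1 : BddAbove S1 := by
      refine ⟨D, fun ε hε => ?_⟩
      obtain ⟨y, -, n, hn⟩ := hε x₀ Set.univ Filter.univ_mem
      exact le_trans (le_of_lt hn) (hdistD _ _)
    have hB3 : BddAbove S3 := by
      refine ⟨D, fun ε hε => ?_⟩
      obtain ⟨x, -, y, -, n, -, hn⟩ := hε Set.univ isOpen_univ ⟨x₀, Set.mem_univ _⟩
      exact le_trans (le_of_lt hn) (hdistD _ _)
    have hne1 : S1.Nonempty := by
      refine ⟨-1, fun x U hU => ⟨x, mem_of_mem_nhds hU, 0, ?_⟩⟩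
      simp only [Function.iterate_zero_apply, dist_self]
      norm_num
    have hne2 : S2.Nonempty := by
      refine ⟨-1, fun x U hU hx => ⟨x, hx, ?_⟩⟩
      have : limsupDist f x x = 0 := by
        simp only [limsupDist, dist_self]
        exact Filter.limsup_const 0
      rw [this]; norm_num
    have hne3 : S3.Nonempty := by
      refine ⟨-1, fun U hU hUne => ?_⟩
      obtain ⟨x, hx⟩ := hUne
      refine ⟨x, hx, x, hx, 1, le_refl _, ?_⟩
      simp only [dist_self]
      norm_num
    have hne4 : S4.Nonempty := by
      refine ⟨-1, fun U hU hUne => ?_⟩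
      obtain ⟨x, hx⟩ := hUne
      refine ⟨x, hx, x, hx, ?_⟩
      have : limsupDist f x x = 0 := by
        simp only [limsupDist, dist_self]
        exact Filter.limsup_const 0
      rw [this]; norm_num
    have hB2 : BddAbove S2 := by
      refine ⟨D, fun ε hε => ?_⟩
      have := aux_easyLr f hε
      obtain ⟨y, -, n, hn⟩ := this x₀ Set.univ Filter.univ_mem
      exact le_trans (le_of_lt hn) (hdistD _ _)
    have hB4 : BddAbove S4 := by
      refine ⟨D, fun ε hε => ?_⟩
      have := aux_easyLd f hε
      obtain ⟨x, -, y, -, n, -, hn⟩ := this Set.univ isOpen_univ ⟨x₀, Set.mem_univ _⟩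
      exact le_trans (le_of_lt hn) (hdistD _ _)
    constructor
    · -- Lr = Lrbar
      apply le_antisymm
      · -- sSup S1 ≤ sSup S2
        refine csSup_le hne1 fun ε hε => ?_
        refine le_of_forall_lt fun δ hδ => ?_
        have hmid : (δ + ε) / 2 ∈ S2 := aux_hardLr f hf hmin hε (by linarith)
        calc δ < (δ + ε) / 2 := by linarith
        _ ≤ sSup S2 := le_csSup hB2 hmid
      · exact csSup_le_csSup hB1 hne2 fun ε hε => aux_easyLr f hε
    · -- Ld = Ldbar
      apply le_antisymm
      · refine csSup_le hne3 fun ε hε => ?_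
        refine le_of_forall_lt fun δ hδ => ?_
        have hmid : (δ + ε) / 2 ∈ S4 := aux_hardLd f hf hmin hε (by linarith)
        calc δ < (δ + ε) / 2 := by linarith
        _ ≤ sSup S4 := le_csSup hB4 hmid
      · exact csSup_le_csSup hB3 hne4 fun ε hε => aux_easyLd f hε
end

section
/- If (X,f) is topologically weakly mixing on a compact metric space, then L_d = L̄_d = diam(X). -/
open Filter Topology

variable {X : Type*} [MetricSpace X]

section AuxLemmas

/-- Iterates of the product map. -/
lemma iterProdAux {Z : Type*} (f : Z → Z) (n : ℕ) (p : Z × Z) :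
    (fun q : Z × Z => (f q.1, f q.2))^[n] p = (f^[n] p.1, f^[n] p.2) := by
  have h : (fun q : Z × Z => (f q.1, f q.2)) = Prod.map f f := rfl
  rw [h, Prod.map_iterate]; rfl

/-- In a nonempty compact metric space, a topologically transitive map has a point with dense
orbit inside any nonempty open set (Baire category argument). -/
lemma existsTransPointAux {Y : Type*} [MetricSpace Y] [CompactSpace Y] [Nonempty Y]
    {F : Y → Y} (hF : Continuous F) (ht : TopTransitive F)
    {U : Set Y} (hU : IsOpen U) (hUne : U.Nonempty) :
    ∃ z ∈ U, Dense (Set.range fun n : ℕ => F^[n] z) := by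
  obtain ⟨u, hu⟩ := TopologicalSpace.exists_dense_seq Y
  set g : ℕ × ℕ → Set Y :=
    fun km => ⋃ n : ℕ, F^[n] ⁻¹' Metric.ball (u km.1) (1/(km.2+1)) with hg
  have hopen : ∀ km, IsOpen (g km) := fun km =>
    isOpen_iUnion fun n => Metric.isOpen_ball.preimage (hF.iterate n)
  have hpos : ∀ m : ℕ, (0:ℝ) < 1/(m+1) := fun m => by positivity
  have hdense : ∀ km, Dense (g km) := by
    intro km
    rw [dense_iff_inter_open]
    intro W hW hWne
    obtain ⟨n, x, hxW, hx⟩ := ht W (Metric.ball (u km.1) (1/(km.2+1))) hW hWne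
      Metric.isOpen_ball ⟨u km.1, Metric.mem_ball_self (hpos km.2)⟩
    exact ⟨x, hxW, Set.mem_iUnion.2 ⟨n, hx⟩⟩
  have hG : Dense (⋂ km, g km) := dense_iInter_of_isOpen hopen hdense
  obtain ⟨z, hzG, hzU⟩ := hG.exists_mem_open hU hUne
  refine ⟨z, hzU, ?_⟩
  rw [Metric.dense_iff]
  intro p r hr
  obtain ⟨m, hm⟩ := exists_nat_one_div_lt (half_pos hr)
  obtain ⟨k, hk⟩ := Metric.denseRange_iff.1 hu p (r/2) (half_pos hr)
  have hz : z ∈ g (k, m) := Set.mem_iInter.1 hzG (k, m)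
  obtain ⟨n, hn⟩ := Set.mem_iUnion.1 hz
  have hn' : dist (F^[n] z) (u k) < 1/(m+1) := hn
  refine ⟨F^[n] z, ?_, ⟨n, rfl⟩⟩
  rw [Metric.mem_ball]
  calc dist (F^[n] z) p ≤ dist (F^[n] z) (u k) + dist (u k) p := dist_triangle _ _ _
    _ < r/2 + r/2 := by rw [dist_comm (u k) p]; exact add_lt_add (hn'.trans hm) hk
    _ = r := add_halves r

/-- A dense orbit visits every infinite open set infinitely often. -/
lemma frequentlyOfDenseOrbitAux {Y : Type*} [MetricSpace Y] {F : Y → Y} {z : Y}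
    (hz : Dense (Set.range fun n : ℕ => F^[n] z)) {V : Set Y} (hV : IsOpen V)
    (hVinf : V.Infinite) : ∃ᶠ n in atTop, F^[n] z ∈ V := by
  by_contra h
  rw [Filter.not_frequently] at h
  obtain ⟨N, hN⟩ := Filter.eventually_atTop.1 h
  set S : Set Y := (fun i : ℕ => F^[i] z) '' (Set.Iio N) with hS
  have hSfin : S.Finite := (Set.finite_Iio N).image _
  have hVS : V ⊆ S := by
    intro v hv
    by_contra hvS
    have hopen : IsOpen (V \ S) := hV.sdiff hSfin.isClosed
    obtain ⟨x, hxr, hxVS⟩ := hz.exists_mem_open hopen ⟨v, hv, hvS⟩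
    obtain ⟨n, rfl⟩ := hxr
    rcases lt_or_ge n N with h1 | h1
    · exact hxVS.2 (Set.mem_image_of_mem _ h1)
    · exact hN n h1 hxVS.1
  exact hVinf (hSfin.subset hVS)

/-- In a weakly mixing system with at least two points, all balls are infinite. -/
lemma ballInfiniteAux {f : X → X} (hwm : WeaklyMixing f)
    {a b : X} (hne : a ≠ b) (p : X) {ρ : ℝ} (hρ : 0 < ρ) :
    (Metric.ball p ρ).Infinite := by
  by_contra hfin
  rw [Set.not_infinite] at hfin
  have hopen : IsOpen ({p} : Set X) := by
    have h : ({p} : Set X) = Metric.ball p ρ \ (Metric.ball p ρ \ {p}) := by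
      ext q
      simp only [Set.mem_singleton_iff, Set.mem_diff, not_and, not_not]
      constructor
      · rintro rfl; exact ⟨Metric.mem_ball_self hρ, fun _ => rfl⟩
      · rintro ⟨h1, h2⟩; exact h2 h1
    rw [h]
    exact Metric.isOpen_ball.sdiff (hfin.subset Set.diff_subset).isClosed
  have hmem : ∀ V : Set X, IsOpen V → V.Nonempty → p ∈ V := by
    intro V hVo hVne
    obtain ⟨v, hv⟩ := hVne
    obtain ⟨n, q, hq1, hq2⟩ := hwm (({p} : Set X) ×ˢ {p}) (({p} : Set X) ×ˢ V)
      (hopen.prod hopen) ⟨(p, p), by simp⟩ (hopen.prod hVo) ⟨(p, v), by simp [hv]⟩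
    have hq : q = (p, p) := by
      have h := hq1
      simp only [Set.mem_prod, Set.mem_singleton_iff] at h
      exact Prod.ext h.1 h.2
    subst hq
    rw [Set.mem_preimage, iterProdAux] at hq2
    simp only [Set.mem_prod, Set.mem_singleton_iff] at hq2
    rw [← hq2.1]; exact hq2.2
  have heq : ∀ c : X, p = c := by
    intro c
    have h0 : dist p c ≤ 0 := by
      by_contra h
      have hm := hmem (Metric.ball c (dist p c)) Metric.isOpen_ball
        ⟨c, Metric.mem_ball_self (not_le.1 h)⟩
      exact absurd (Metric.mem_ball.1 hm) (lt_irrefl _)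
    exact dist_le_zero.1 h0
  exact hne ((heq a).symm.trans (heq b))

end AuxLemmas

/-- For a weakly mixing system, `L_d = L̄_d = diam X`. -/
theorem stmt11 [CompactSpace X] (f : X → X) (hf : Continuous f) (hwm : WeaklyMixing f) :
    Ld f = Ldbar f ∧ Ldbar f = Metric.diam (Set.univ : Set X) := by
  set D := Metric.diam (Set.univ : Set X) with hD
  rcases isEmpty_or_nonempty X with hE | hN
  · -- empty space: both sets are all of ℝ, hence `sSup = 0 = diam ∅`
    have hDz : D = 0 := by
      rw [hD, Set.univ_eq_empty_iff.2 hE, Metric.diam_empty]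
    have hmem1 : ∀ ε : ℝ, ε ∈ {ε : ℝ | ∀ U : Set X, IsOpen U → U.Nonempty →
        ∃ x ∈ U, ∃ y ∈ U, ∃ n : ℕ, 1 ≤ n ∧ ε < dist (f^[n] x) (f^[n] y)} := by
      intro ε U _ hUne
      obtain ⟨x, _⟩ := hUne
      exact (hE.false x).elim
    have hmem2 : ∀ ε : ℝ, ε ∈ {ε : ℝ | ∀ U : Set X, IsOpen U → U.Nonempty →
        ∃ x ∈ U, ∃ y ∈ U, ε < limsupDist f x y} := by
      intro ε U _ hUne
      obtain ⟨x, _⟩ := hUne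
      exact (hE.false x).elim
    have h1 : Ld f = 0 := Real.sSup_of_not_bddAbove (by
      rintro ⟨B, hB⟩
      have h := hB (hmem1 (B + 1))
      linarith)
    have h2 : Ldbar f = 0 := Real.sSup_of_not_bddAbove (by
      rintro ⟨B, hB⟩
      have h := hB (hmem2 (B + 1))
      linarith)
    exact ⟨h1.trans h2.symm, h2.trans hDz.symm⟩
  · -- nonempty space
    have hbdd : ∀ x y : X, dist x y ≤ D :=
      fun x y => Metric.dist_le_diam_of_mem isCompact_univ.isBounded trivial trivial
    have hlimsup_le : ∀ x y : X, limsupDist f x y ≤ D := by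
      intro x y
      refine Filter.limsup_le_of_le ?_ (Filter.Eventually.of_forall fun n => hbdd _ _)
      exact Filter.IsBoundedUnder.isCoboundedUnder_le
        (Filter.isBoundedUnder_of ⟨0, fun n => dist_nonneg⟩)
    have key : ∀ ε < D, ∀ U : Set X, IsOpen U → U.Nonempty →
        ∃ x ∈ U, ∃ y ∈ U, ε < limsupDist f x y := by
      intro ε hε U hU hUne
      rcases lt_or_ge ε 0 with hε0 | hε0
      · obtain ⟨x, hx⟩ := hUne
        refine ⟨x, hx, x, hx, ?_⟩
        have h0 : limsupDist f x x = 0 := by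
          have h : (fun n : ℕ => dist (f^[n] x) (f^[n] x)) = fun _ : ℕ => (0:ℝ) := by
            funext n; exact dist_self _
          rw [limsupDist, h, Filter.limsup_const]
        rw [h0]; exact hε0
      · -- 0 ≤ ε < D
        obtain ⟨a, b, hab⟩ : ∃ a b : X, ε < dist a b := by
          by_contra h
          push_neg at h
          exact absurd (Metric.diam_le_of_forall_dist_le hε0 fun x _ y _ => h x y)
            (not_le.2 hε)
        have hne : a ≠ b := by
          rintro rfl
          rw [dist_self] at hab
          linarith
        set r : ℝ := (dist a b - ε)/3 with hr
        have hrpos : 0 < r := by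
          have h := sub_pos.2 hab
          rw [hr]; linarith
        set F : X × X → X × X := fun p => (f p.1, f p.2) with hF
        have hFcont : Continuous F := (hf.comp continuous_fst).prodMk (hf.comp continuous_snd)
        obtain ⟨z, hzU, hzD⟩ := existsTransPointAux hFcont hwm (hU.prod hU) (hUne.prod hUne)
        have hVinf : (Metric.ball a r ×ˢ Metric.ball b r).Infinite :=
          (ballInfiniteAux hwm hne a hrpos).prod_left ⟨b, Metric.mem_ball_self hrpos⟩
        have hfreq := frequentlyOfDenseOrbitAux hzD
          (Metric.isOpen_ball.prod Metric.isOpen_ball) hVinf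
        refine ⟨z.1, hzU.1, z.2, hzU.2, ?_⟩
        have hfreq' : ∃ᶠ n in atTop, ε + r ≤ dist (f^[n] z.1) (f^[n] z.2) := by
          refine hfreq.mono ?_
          intro n hn
          rw [hF, iterProdAux] at hn
          obtain ⟨hn1, hn2⟩ := hn
          rw [Metric.mem_ball] at hn1 hn2
          have ht := dist_triangle4 a (f^[n] z.1) (f^[n] z.2) b
          have hc1 : dist a (f^[n] z.1) = dist (f^[n] z.1) a := dist_comm _ _
          have hc2 : dist (f^[n] z.2) b = dist (f^[n] z.2) b := rfl
          rw [hr] at *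
          linarith
        have hlim : ε + r ≤ limsupDist f z.1 z.2 := by
          rw [limsupDist]
          exact Filter.le_limsup_of_frequently_le hfreq'
            (Filter.isBoundedUnder_of ⟨D, fun n => hbdd _ _⟩)
        linarith
    have hS1 : {ε : ℝ | ∀ U : Set X, IsOpen U → U.Nonempty →
        ∃ x ∈ U, ∃ y ∈ U, ε < limsupDist f x y} = Set.Iio D := by
      ext ε
      constructor
      · intro hε
        obtain ⟨x, -, y, -, hxy⟩ := hε Set.univ isOpen_univ
          ⟨Classical.arbitrary X, trivial⟩
        exact lt_of_lt_of_le hxy (hlimsup_le x y)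
      · exact fun hε => key ε hε
    have hS2 : {ε : ℝ | ∀ U : Set X, IsOpen U → U.Nonempty →
        ∃ x ∈ U, ∃ y ∈ U, ∃ n : ℕ, 1 ≤ n ∧ ε < dist (f^[n] x) (f^[n] y)} = Set.Iio D := by
      ext ε
      constructor
      · intro hε
        obtain ⟨x, -, y, -, n, -, hxy⟩ := hε Set.univ isOpen_univ
          ⟨Classical.arbitrary X, trivial⟩
        exact lt_of_lt_of_le hxy (hbdd _ _)
      · intro hε U hU hUne
        obtain ⟨x, hx, y, hy, hxy⟩ := key ε hε U hU hUne
        have hcb : Filter.IsCoboundedUnder (· ≤ ·) atTop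
            (fun n : ℕ => dist (f^[n] x) (f^[n] y)) :=
          Filter.IsBoundedUnder.isCoboundedUnder_le
            (Filter.isBoundedUnder_of ⟨0, fun n => dist_nonneg⟩)
        have hxy' : ε < Filter.limsup (fun n : ℕ => dist (f^[n] x) (f^[n] y)) atTop := hxy
        have hfr := Filter.frequently_lt_of_lt_limsup hcb hxy'
        obtain ⟨n, hn1, hn2⟩ := Filter.frequently_atTop.1 hfr 1
        exact ⟨x, hx, y, hy, n, hn1, hn2⟩
    rw [Ld, Ldbar, hS1, hS2, csSup_Iio]
    exact ⟨rfl, rfl⟩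
end

section
/- If (X,f) is topologically weakly mixing on a compact metric space, then L_r = L̄_r. -/
open Filter Topology

variable {X : Type*} [MetricSpace X]

section Aux
open Metric Set

private lemma prodMap_iterate (f : X → X) :
    ∀ (n : ℕ) (p : X × X),
      (fun p : X × X => (f p.1, f p.2))^[n] p = (f^[n] p.1, f^[n] p.2) := by
  intro n
  induction n with
  | zero => intro p; simp
  | succ n ih =>
      intro p
      rw [Function.iterate_succ_apply, ih]
      simp [Function.iterate_succ_apply]

private lemma wm_trans {f : X → X} (hwm : WeaklyMixing f)
    {U V : Set X} (hUo : IsOpen U) (hUne : U.Nonempty) (hVo : IsOpen V) (hVne : V.Nonempty) :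
    ∃ n : ℕ, ∃ w ∈ U, f^[n] w ∈ V := by
  obtain ⟨u, hu⟩ := hUne
  obtain ⟨n, p, hp1, hp2⟩ := hwm (U ×ˢ univ) (V ×ˢ univ)
    (hUo.prod isOpen_univ) ⟨(u, u), hu, trivial⟩
    (hVo.prod isOpen_univ) (hVne.prod ⟨u, trivial⟩)
  rw [Set.mem_preimage, prodMap_iterate f n p] at hp2
  exact ⟨n, p.1, hp1.1, hp2.1⟩

private lemma wm_surj [CompactSpace X] {f : X → X} (hf : Continuous f) (hwm : WeaklyMixing f) :
    Function.Surjective f := by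
  intro v
  by_contra hv
  push_neg at hv
  have hvr : v ∉ Set.range f := by rintro ⟨a, ha⟩; exact hv a ha
  have hVo : IsOpen (Set.range f)ᶜ := (isCompact_range hf).isClosed.isOpen_compl
  obtain ⟨A, B, hAo, hAne, hBo, hBne, hdisj, hBsub⟩ :
      ∃ A B : Set X, IsOpen A ∧ A.Nonempty ∧ IsOpen B ∧ B.Nonempty ∧
        (∀ z, z ∈ A → z ∈ B → False) ∧ B ⊆ (Set.range f)ᶜ := by
    by_cases h2 : ∃ v' ∈ (Set.range f)ᶜ, v' ≠ v
    · obtain ⟨v', hv', hne⟩ := h2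
      have hd : 0 < dist v v' := dist_pos.mpr hne.symm
      refine ⟨ball v' (dist v v' / 3), ball v (dist v v' / 3) ∩ (Set.range f)ᶜ,
        isOpen_ball, ⟨v', mem_ball_self (by linarith)⟩, isOpen_ball.inter hVo,
        ⟨v, mem_ball_self (by linarith), hvr⟩, ?_, inter_subset_right⟩
      intro z hz1 hz2
      have h1 : dist z v' < dist v v' / 3 := mem_ball.mp hz1
      have h2 : dist z v < dist v v' / 3 := mem_ball.mp hz2.1
      have := dist_triangle v z v'
      rw [dist_comm v z] at this
      linarith
    · push_neg at h2
      have hset : (Set.range f)ᶜ = {v} := by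
        apply subset_antisymm
        · intro z hz; exact h2 z hz
        · intro z hz; rw [Set.mem_singleton_iff] at hz; rw [hz]; exact hvr
      have hx : ∃ u : X, u ≠ v := by
        by_contra hu
        push_neg at hu
        exact hvr ⟨v, hu (f v)⟩
      obtain ⟨u, hu⟩ := hx
      refine ⟨{v}ᶜ, {v}, isClosed_singleton.isOpen_compl, ⟨u, hu⟩, hset ▸ hVo,
        ⟨v, rfl⟩, ?_, hset ▸ subset_rfl⟩
      intro z hz1 hz2
      exact hz1 hz2
  obtain ⟨n, w, hw, hwn⟩ := wm_trans hwm hAo hAne hBo hBne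
  match n with
  | 0 => exact hdisj w hw hwn
  | (m+1) =>
      rw [Function.iterate_succ_apply'] at hwn
      exact hBsub hwn ⟨f^[m] w, rfl⟩

private lemma wm_furst_aux {f : X → X} (hf : Continuous f) (hwm : WeaklyMixing f)
    {V : Set X} (hVo : IsOpen V) (hVne : V.Nonempty)
    {ι : Type*} [DecidableEq ι] (s : Finset ι) (B : ι → Set X) :
    (∀ k ∈ s, IsOpen (B k)) → (∀ k ∈ s, (B k).Nonempty) →
    ∃ A' B' : Set X, IsOpen A' ∧ A'.Nonempty ∧ IsOpen B' ∧ B'.Nonempty ∧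
      ∀ m : ℕ, (∃ z ∈ A', f^[m] z ∈ B') → ∀ k ∈ s, ∃ w ∈ V, f^[m] w ∈ B k := by
  induction s using Finset.induction_on with
  | empty =>
      intro _ _
      obtain ⟨v0, _⟩ := hVne
      exact ⟨univ, univ, isOpen_univ, ⟨v0, trivial⟩, isOpen_univ, ⟨v0, trivial⟩,
        by intro m _ k hk; exact absurd hk (Finset.notMem_empty k)⟩
  | @insert a s ha ih =>
      intro hBo hBne
      obtain ⟨A', B', hA'o, hA'ne, hB'o, hB'ne, hprop⟩ :=
        ih (fun k hk => hBo k (Finset.mem_insert_of_mem hk))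
          (fun k hk => hBne k (Finset.mem_insert_of_mem hk))
      have hBao : IsOpen (B a) := hBo a (Finset.mem_insert_self a s)
      have hBane : (B a).Nonempty := hBne a (Finset.mem_insert_self a s)
      obtain ⟨t, p, hp1, hp2⟩ := hwm (A' ×ˢ B') (V ×ˢ B a)
        (hA'o.prod hB'o) (hA'ne.prod hB'ne) (hVo.prod hBao) (hVne.prod hBane)
      rw [Set.mem_preimage, prodMap_iterate f t p] at hp2
      refine ⟨A' ∩ f^[t] ⁻¹' V, B' ∩ f^[t] ⁻¹' (B a),
        hA'o.inter (hVo.preimage (hf.iterate t)), ⟨p.1, hp1.1, hp2.1⟩,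
        hB'o.inter (hBao.preimage (hf.iterate t)), ⟨p.2, hp1.2, hp2.2⟩, ?_⟩
      rintro m ⟨z, hz, hz2⟩ k hk
      rcases Finset.mem_insert.mp hk with rfl | hk'
      · refine ⟨f^[t] z, hz.2, ?_⟩
        rw [← Function.iterate_add_apply, Nat.add_comm, Function.iterate_add_apply]
        exact hz2.2
      · exact hprop m ⟨z, hz.1, hz2.1⟩ k hk'

private lemma wm_furst {f : X → X} (hf : Continuous f) (hwm : WeaklyMixing f)
    {V : Set X} (hVo : IsOpen V) (hVne : V.Nonempty)
    {ι : Type*} (s : Finset ι) (B : ι → Set X)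
    (hBo : ∀ k ∈ s, IsOpen (B k)) (hBne : ∀ k ∈ s, (B k).Nonempty) :
    ∃ n : ℕ, ∀ k ∈ s, ∃ w ∈ V, f^[n] w ∈ B k := by
  classical
  obtain ⟨A', B', hA'o, hA'ne, hB'o, hB'ne, hprop⟩ :=
    wm_furst_aux hf hwm hVo hVne s B hBo hBne
  obtain ⟨n, w, hw, hwn⟩ := wm_trans hwm hA'o hA'ne hB'o hB'ne
  exact ⟨n, hprop n ⟨w, hw, hwn⟩⟩

private lemma eccentric_syndetic [CompactSpace X] {f : X → X} (hf : Continuous f)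
    {ε : ℝ} (hε : ∀ x : X, ∀ U ∈ 𝓝 x, ∃ y ∈ U, ∃ n : ℕ, ε < dist (f^[n] x) (f^[n] y))
    (x : X) {τ : ℝ} (hτ : 0 < τ) :
    ∃ G : ℕ, ∀ a : ℕ, ∃ n : ℕ, a ≤ n ∧ n ≤ a + G ∧ ∃ q : X, ε - τ < dist (f^[n] x) q := by
  by_contra hcon
  push_neg at hcon
  choose a ha using hcon
  set u : ℕ → X := fun G => f^[a G] x with hu
  obtain ⟨z, -, φ, hφ, hconv⟩ := isCompact_univ.tendsto_subseq (fun G => Set.mem_univ (u G))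
  set C : Set X := ⋂ q : X, {c : X | dist c q ≤ ε - τ} with hC
  have hCcl : IsClosed C :=
    isClosed_iInter fun q => isClosed_le (continuous_id.dist continuous_const) continuous_const
  have hmem : ∀ i : ℕ, f^[i] z ∈ C := by
    intro i
    apply hCcl.mem_of_tendsto (((hf.iterate i).tendsto z).comp hconv)
    rw [eventually_atTop]
    refine ⟨i, fun j hj => ?_⟩
    have hiφ : i ≤ φ j := le_trans hj hφ.le_apply
    have key := ha (φ j) (a (φ j) + i) (Nat.le_add_right _ _) (by omega)
    rw [Set.mem_iInter]
    intro q
    have : f^[i] (u (φ j)) = f^[i + a (φ j)] x := by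
      rw [Function.iterate_add_apply]
    simp only [Function.comp_apply, this, Set.mem_setOf_eq]
    rw [Nat.add_comm]
    exact key q
  obtain ⟨y, -, m, hm⟩ := hε z univ univ_mem
  have := Set.mem_iInter.mp (hmem m) (f^[m] y)
  simp only [Set.mem_setOf_eq] at this
  linarith

private lemma star_lemma [CompactSpace X] {f : X → X} (hf : Continuous f) (hwm : WeaklyMixing f)
    {ε : ℝ} (hε : ∀ x : X, ∀ U ∈ 𝓝 x, ∃ y ∈ U, ∃ n : ℕ, ε < dist (f^[n] x) (f^[n] y))
    {c : ℝ} (hlt : c < ε) (x : X) {V : Set X} (hVo : IsOpen V) (hVne : V.Nonempty) (N : ℕ) :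
    ∃ n : ℕ, N ≤ n ∧ ∃ w ∈ V, c < dist (f^[n] x) (f^[n] w) := by
  rcases lt_or_ge c 0 with hneg | hpos
  · obtain ⟨w, hw⟩ := hVne
    exact ⟨N, le_rfl, w, hw, lt_of_lt_of_le hneg dist_nonneg⟩
  set δ := (ε - c) / 4 with hδdef
  have hδ : 0 < δ := by rw [hδdef]; linarith
  obtain ⟨G, hG⟩ := eccentric_syndetic hf hε x hδ
  obtain ⟨t, ht⟩ := isCompact_univ.elim_finite_subcover (fun q : X => ball q δ)
    (fun q => isOpen_ball) (fun p _ => Set.mem_iUnion.mpr ⟨p, mem_ball_self hδ⟩)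
  have hsurj := wm_surj hf hwm
  classical
  obtain ⟨n₀, hn₀⟩ := wm_furst hf hwm hVo hVne ((Finset.range (N + G + 1)) ×ˢ t)
    (fun k => f^[k.1] ⁻¹' ball k.2 δ)
    (fun k _ => isOpen_ball.preimage (hf.iterate k.1))
    (fun k _ => by
      obtain ⟨w, hw⟩ := hsurj.iterate k.1 k.2
      exact ⟨w, by simp only [Set.mem_preimage, hw]; exact mem_ball_self hδ⟩)
  obtain ⟨n, hn1, hn2, q, hq⟩ := hG (n₀ + N)
  obtain ⟨cq, hcq, hqc⟩ : ∃ cq ∈ t, q ∈ ball cq δ := by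
    have := ht (Set.mem_univ q)
    simpa using this
  have hks : ((n - n₀ : ℕ), cq) ∈ (Finset.range (N + G + 1)) ×ˢ t :=
    Finset.mem_product.mpr ⟨Finset.mem_range.mpr (by omega), hcq⟩
  obtain ⟨w, hwV, hwB⟩ := hn₀ _ hks
  rw [Set.mem_preimage, ← Function.iterate_add_apply] at hwB
  have hnn : n - n₀ + n₀ = n := by omega
  rw [hnn] at hwB
  refine ⟨n, by omega, w, hwV, ?_⟩
  have t1 : dist (f^[n] x) q ≤ dist (f^[n] x) (f^[n] w) + dist (f^[n] w) q :=
    dist_triangle _ _ _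
  have t2 : dist (f^[n] w) q ≤ dist (f^[n] w) cq + dist cq q := dist_triangle _ _ _
  have t3 : dist cq q < δ := by rw [dist_comm]; exact mem_ball.mp hqc
  have t4 : dist (f^[n] w) cq < δ := mem_ball.mp hwB
  rw [hδdef] at hq t3 t4
  linarith

private lemma nest_lemma [CompactSpace X] {f : X → X} (hf : Continuous f)
    {s₁ s₂ : ℝ} (hs : s₂ < s₁) (x : X)
    (H : ∀ V : Set X, IsOpen V → V.Nonempty → ∀ N : ℕ,
      ∃ n : ℕ, N ≤ n ∧ ∃ w ∈ V, s₁ < dist (f^[n] x) (f^[n] w))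
    {U : Set X} (hUo : IsOpen U) (hxU : x ∈ U) :
    ∃ y ∈ U, s₂ ≤ limsupDist f x y := by
  have step : ∀ V : Set X, IsOpen V → V.Nonempty → ∀ N : ℕ,
      ∃ p : Set X × ℕ, IsOpen p.1 ∧ p.1.Nonempty ∧ closure p.1 ⊆ V ∧ N ≤ p.2 ∧
        ∀ z ∈ closure p.1, s₂ < dist (f^[p.2] x) (f^[p.2] z) := by
    intro V hVo hVne N
    obtain ⟨n, hn, w, hwV, hsep⟩ := H V hVo hVne N
    set W := V ∩ (fun z => dist (f^[n] x) (f^[n] z)) ⁻¹' Set.Ioi s₂ with hW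
    have hWo : IsOpen W := hVo.inter (isOpen_Ioi.preimage (continuous_const.dist (hf.iterate n)))
    have hwW : w ∈ W := ⟨hwV, by simp only [Set.mem_preimage, Set.mem_Ioi]; linarith⟩
    obtain ⟨r, hr, hball⟩ := Metric.nhds_basis_closedBall.mem_iff.mp (hWo.mem_nhds hwW)
    refine ⟨(ball w r, n), isOpen_ball, ⟨w, mem_ball_self hr⟩, ?_, hn, ?_⟩
    · exact (closure_ball_subset_closedBall.trans hball).trans inter_subset_left
    · intro z hz
      exact ((closure_ball_subset_closedBall.trans hball) hz).2
  have step' : ∀ p : {p : Set X × ℕ // IsOpen p.1 ∧ p.1.Nonempty},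
      ∃ q : {p : Set X × ℕ // IsOpen p.1 ∧ p.1.Nonempty},
        closure q.1.1 ⊆ p.1.1 ∧ p.1.2 + 1 ≤ q.1.2 ∧
        ∀ z ∈ closure q.1.1, s₂ < dist (f^[q.1.2] x) (f^[q.1.2] z) := by
    rintro ⟨⟨V, N⟩, hVo, hVne⟩
    obtain ⟨p, hpo, hpne, hsub, hge, hsep⟩ := step V hVo hVne (N + 1)
    exact ⟨⟨p, hpo, hpne⟩, hsub, hge, hsep⟩
  choose F hF1 hF2 hF3 using step'
  set seq : ℕ → {p : Set X × ℕ // IsOpen p.1 ∧ p.1.Nonempty} :=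
    fun k => F^[k] ⟨(U, 0), hUo, ⟨x, hxU⟩⟩ with hseqdef
  have hseq : ∀ k, seq (k + 1) = F (seq k) := fun k => Function.iterate_succ_apply' F k _
  have hidx : ∀ k, k ≤ (seq k).1.2 := by
    intro k
    induction k with
    | zero => exact Nat.zero_le _
    | succ k ih =>
        rw [hseq]
        have := hF2 (seq k)
        omega
  set K : ℕ → Set X := fun k => closure ((seq (k + 1)).1.1) with hK
  have hKne : ∀ k, (K k).Nonempty := fun k => ((seq (k + 1)).2.2).closure
  have hKcl : ∀ k, IsClosed (K k) := fun k => isClosed_closure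
  have hKsub : ∀ k, K (k + 1) ⊆ K k := by
    intro k
    have h1 : closure ((seq (k + 2)).1.1) ⊆ (seq (k + 1)).1.1 := by
      rw [hseq (k + 1)]; exact hF1 (seq (k + 1))
    exact h1.trans subset_closure
  obtain ⟨y, hy⟩ := IsCompact.nonempty_iInter_of_sequence_nonempty_isCompact_isClosed K
    hKsub hKne ((hKcl 0).isCompact) hKcl
  have hyk : ∀ k, y ∈ K k := fun k => Set.mem_iInter.mp hy k
  have hyU : y ∈ U := by
    have h1 : closure ((seq 1).1.1) ⊆ (seq 0).1.1 := by rw [hseq 0]; exact hF1 (seq 0)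
    exact h1 (hyk 0)
  refine ⟨y, hyU, ?_⟩
  have hfreq : ∃ᶠ n in atTop, s₂ ≤ dist (f^[n] x) (f^[n] y) := by
    rw [frequently_atTop]
    intro m
    refine ⟨(seq (m + 1)).1.2, ?_, ?_⟩
    · have := hidx (m + 1); omega
    · have hy' : y ∈ closure ((F (seq m)).1.1) := by rw [← hseq m]; exact hyk m
      have h := hF3 (seq m) y hy'
      rw [hseq m]
      exact h.le
  have hbdd : IsBoundedUnder (· ≤ ·) atTop (fun n : ℕ => dist (f^[n] x) (f^[n] y)) :=
    Filter.isBoundedUnder_of ⟨Metric.diam (Set.univ : Set X), fun n =>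
      Metric.dist_le_diam_of_mem isCompact_univ.isBounded trivial trivial⟩
  simp only [limsupDist]
  exact Filter.le_limsup_of_frequently_le hfreq hbdd

end Aux

/-- For a weakly mixing system, `L_r = L̄_r`. -/
theorem stmt12 [CompactSpace X] (f : X → X) (hf : Continuous f) (hwm : WeaklyMixing f) :
    Lr f = Lrbar f := by
  classical
  set S₁ := {ε : ℝ | ∀ x : X, ∀ U ∈ 𝓝 x, ∃ y ∈ U, ∃ n : ℕ, ε < dist (f^[n] x) (f^[n] y)}
    with hS₁
  set S₂ := {ε : ℝ | ∀ x : X, ∀ U : Set X, IsOpen U → x ∈ U → ∃ y ∈ U, ε < limsupDist f x y}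
    with hS₂
  have hLr : Lr f = sSup S₁ := rfl
  have hLrbar : Lrbar f = sSup S₂ := rfl
  have hself : ∀ x : X, limsupDist f x x = 0 := by
    intro x
    simp only [limsupDist, dist_self]
    exact limsup_const 0
  have hsub : S₂ ⊆ S₁ := by
    intro ε hε x U hU
    obtain ⟨y, hyU, hlim⟩ := hε x (interior U) isOpen_interior (mem_interior_iff_mem_nhds.mpr hU)
    refine ⟨y, interior_subset hyU, ?_⟩
    by_contra hcon
    push_neg at hcon
    have hb : limsupDist f x y ≤ ε := by
      simp only [limsupDist]
      refine Filter.limsup_le_of_le ?_ (Filter.Eventually.of_forall fun n => (hcon n))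
      exact Filter.IsBoundedUnder.isCoboundedUnder_le
        (Filter.isBoundedUnder_of ⟨0, fun n => dist_nonneg⟩)
    exact absurd hlim (not_lt.mpr hb)
  have hmain : ∀ ε ∈ S₁, ∀ c : ℝ, c < ε → c ∈ S₂ := by
    intro ε hε c hc
    simp only [hS₂, Set.mem_setOf_eq]
    intro x U hUo hxU
    by_cases hneg : c < 0
    · exact ⟨x, hxU, by rw [hself x]; exact hneg⟩
    push_neg at hneg
    have hε' : ∀ x : X, ∀ U ∈ 𝓝 x, ∃ y ∈ U, ∃ n : ℕ, ε < dist (f^[n] x) (f^[n] y) := hε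
    have h1 : (c + ε) / 2 < ε := by linarith
    have h2 : (3 * c + ε) / 4 < (c + ε) / 2 := by linarith
    have h3 : c < (3 * c + ε) / 4 := by linarith
    have H : ∀ V : Set X, IsOpen V → V.Nonempty → ∀ N : ℕ,
        ∃ n : ℕ, N ≤ n ∧ ∃ w ∈ V, (c + ε) / 2 < dist (f^[n] x) (f^[n] w) :=
      fun V hVo hVne N => star_lemma hf hwm hε' h1 x hVo hVne N
    obtain ⟨y, hyU, hlim⟩ := nest_lemma hf h2 x H hUo hxU
    exact ⟨y, hyU, lt_of_lt_of_le h3 hlim⟩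
  rcases isEmpty_or_nonempty X with hemp | hne
  · have heq : S₁ = S₂ := by
      ext ε
      constructor <;> intro _ <;> intro x <;> exact hemp.elim x
    rw [hLr, hLrbar, heq]
  · obtain ⟨x₀⟩ := hne
    have hm1S₂ : (-1 : ℝ) ∈ S₂ := by
      intro x U hUo hxU
      exact ⟨x, hxU, by rw [hself x]; norm_num⟩
    have hm1S₁ : (-1 : ℝ) ∈ S₁ := hsub hm1S₂
    have hbdd₁ : BddAbove S₁ := by
      refine ⟨Metric.diam (Set.univ : Set X), fun ε hε => ?_⟩
      obtain ⟨y, -, n, hn⟩ := hε x₀ Set.univ Filter.univ_mem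
      exact le_trans hn.le (Metric.dist_le_diam_of_mem isCompact_univ.isBounded trivial trivial)
    have hbdd₂ : BddAbove S₂ := hbdd₁.mono hsub
    rw [hLr, hLrbar]
    apply le_antisymm
    · apply csSup_le ⟨-1, hm1S₁⟩
      intro ε hε
      by_contra hcon
      push_neg at hcon
      obtain ⟨c, hc1, hc2⟩ := exists_between hcon
      exact absurd (le_csSup hbdd₂ (hmain ε hε c hc2)) (not_le.mpr hc1)
    · exact csSup_le_csSup hbdd₁ ⟨-1, hm1S₂⟩ hsub
end

section
/- If (X,f) is a topologically weakly mixing minimal dynamical system on a compact metric space, then all four Lyapunov numbers coincide and equal the diameter of X: L_r = L̄_r = L_d = L̄_d = diam(X). -/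
open Filter Topology

variable {X : Type*} [MetricSpace X]

section LyapunovAux

open Filter Topology

variable {X : Type*} [MetricSpace X]

lemma lyap_prod_iterate {Y : Type*} (f : Y → Y) (m : ℕ) (p : Y × Y) :
    (fun p : Y × Y => (f p.1, f p.2))^[m] p = (f^[m] p.1, f^[m] p.2) := by
  induction m generalizing p with
  | zero => simp
  | succ m ih =>
    rw [Function.iterate_succ_apply, ih]
    simp [Function.iterate_succ_apply]

lemma lyap_iterate_comm {Y : Type*} (f : Y → Y) (m n : ℕ) (y : Y) :
    f^[m] (f^[n] y) = f^[n] (f^[m] y) := by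
  rw [← Function.iterate_add_apply, Nat.add_comm, Function.iterate_add_apply]

lemma lyap_orbit_hits (f : X → X) {x : X} (h : TransitivePoint f x) {A : Set X}
    (hAo : IsOpen A) (hAne : A.Nonempty) : ∃ n : ℕ, f^[n] x ∈ A := by
  obtain ⟨_, ⟨n, rfl⟩, hm⟩ := h.exists_mem_open hAo hAne
  exact ⟨n, hm⟩

lemma lyap_transitive (f : X → X) (hmin : ∀ x : X, TransitivePoint f x) :
    TopTransitive f := by
  intro U V hUo hUne hVo hVne
  obtain ⟨u, hu⟩ := hUne
  obtain ⟨n, hn⟩ := lyap_orbit_hits f (hmin u) hVo hVne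
  exact ⟨n, u, hu, hn⟩

lemma lyap_surj [CompactSpace X] [Nonempty X] (f : X → X) (hf : Continuous f)
    (hmin : ∀ x : X, TransitivePoint f x) : Function.Surjective f := by
  obtain ⟨x₀⟩ := ‹Nonempty X›
  have hdense : Dense (Set.range fun n : ℕ => f^[n] (f x₀)) := hmin (f x₀)
  have hsub : (Set.range fun n : ℕ => f^[n] (f x₀)) ⊆ Set.range f := by
    rintro _ ⟨n, rfl⟩
    show f^[n] (f x₀) ∈ Set.range f
    rw [← Function.iterate_succ_apply, Function.iterate_succ_apply']
    exact ⟨_, rfl⟩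
  have hcl : IsClosed (Set.range f) := (isCompact_range hf).isClosed
  intro y
  have : y ∈ closure (Set.range f) := (hdense.mono hsub) y
  rwa [hcl.closure_eq] at this

lemma lyap_syndetic [CompactSpace X] (f : X → X) (hf : Continuous f)
    (hmin : ∀ x : X, TransitivePoint f x) (x : X) {A : Set X}
    (hAo : IsOpen A) (hAne : A.Nonempty) :
    ∃ K : ℕ, ∀ i : ℕ, ∃ k ≤ K, f^[i + k] x ∈ A := by
  have hcov : (Set.univ : Set X) ⊆ ⋃ k : ℕ, f^[k] ⁻¹' A := by
    intro z _
    obtain ⟨n, hn⟩ := lyap_orbit_hits f (hmin z) hAo hAne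
    exact Set.mem_iUnion.2 ⟨n, hn⟩
  obtain ⟨t, ht⟩ := isCompact_univ.elim_finite_subcover (fun k : ℕ => f^[k] ⁻¹' A)
    (fun k => hAo.preimage (hf.iterate k)) hcov
  refine ⟨t.sup id, fun i => ?_⟩
  obtain ⟨k, hk, hkA⟩ := Set.mem_iUnion₂.1 (ht (Set.mem_univ (f^[i] x)))
  refine ⟨k, Finset.le_sup (f := id) hk, ?_⟩
  rwa [Nat.add_comm, Function.iterate_add_apply]

/-- Furstenberg intersection: a common hitting time for a whole run of preimages. -/
lemma lyap_run_hitting [Nonempty X] (f : X → X) (hf : Continuous f)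
    (hsurj : Function.Surjective f) (hwm : WeaklyMixing f) (htrans : TopTransitive f)
    {V B : Set X} (hVo : IsOpen V) (hVne : V.Nonempty) (hBo : IsOpen B)
    (hBne : B.Nonempty) (K : ℕ) :
    ∃ n : ℕ, ∀ k ≤ K, ∃ y ∈ V, f^[n + k] y ∈ B := by
  suffices h : ∃ E F : Set X, IsOpen E ∧ E.Nonempty ∧ IsOpen F ∧ F.Nonempty ∧
      ∀ n : ℕ, (∃ y ∈ E, f^[n] y ∈ F) → ∀ k ≤ K, ∃ y ∈ V, f^[n + k] y ∈ B by
    obtain ⟨E, F, hEo, hEne, hFo, hFne, hEF⟩ := h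
    obtain ⟨n, z, hzE, hzF⟩ := htrans E F hEo hEne hFo hFne
    exact ⟨n, hEF n ⟨z, hzE, hzF⟩⟩
  induction K with
  | zero =>
    refine ⟨V, B, hVo, hVne, hBo, hBne, fun n hn k hk => ?_⟩
    interval_cases k
    simpa using hn
  | succ K ih =>
    obtain ⟨E, F, hEo, hEne, hFo, hFne, hEF⟩ := ih
    set B₁ : Set X := f^[K + 1] ⁻¹' B with hB₁
    have hB₁o : IsOpen B₁ := hBo.preimage (hf.iterate _)
    have hB₁ne : B₁.Nonempty := by
      obtain ⟨b, hb⟩ := hBne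
      obtain ⟨a, ha⟩ := hsurj.iterate (K + 1) b
      exact ⟨a, show f^[K + 1] a ∈ B from ha ▸ hb⟩
    obtain ⟨m, pq, hpq1, hpq2⟩ := hwm (V ×ˢ B₁) (E ×ˢ F) (hVo.prod hB₁o)
      (hVne.prod hB₁ne) (hEo.prod hFo) (hEne.prod hFne)
    rw [Set.mem_preimage, lyap_prod_iterate] at hpq2
    obtain ⟨hp1, hq1⟩ := hpq1
    obtain ⟨hp2, hq2⟩ := hpq2
    refine ⟨V ∩ f^[m] ⁻¹' E, B₁ ∩ f^[m] ⁻¹' F, hVo.inter (hEo.preimage (hf.iterate m)),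
      ⟨pq.1, hp1, hp2⟩, hB₁o.inter (hFo.preimage (hf.iterate m)),
      ⟨pq.2, hq1, hq2⟩, ?_⟩
    rintro n ⟨y, ⟨hyV, hyE⟩, hynB₁, hynF⟩ k hk
    rcases Nat.lt_or_ge k (K + 1) with hlt | hge
    · refine hEF n ⟨f^[m] y, hyE, ?_⟩ k (Nat.lt_succ_iff.mp hlt)
      rw [lyap_iterate_comm]
      exact hynF
    · have hk' : k = K + 1 := le_antisymm hk hge
      subst hk'
      refine ⟨y, hyV, ?_⟩
      have : f^[K + 1] (f^[n] y) ∈ B := hynB₁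
      rwa [← Function.iterate_add_apply, Nat.add_comm] at this

/-- The key dynamical lemma: orbits separate beyond any `ε < diam X`,
at arbitrarily late times, starting from any open set. -/
lemma lyap_key [CompactSpace X] [Nonempty X] (f : X → X) (hf : Continuous f)
    (hmin : ∀ x : X, TransitivePoint f x) (hwm : WeaklyMixing f)
    (x : X) {V : Set X} (hVo : IsOpen V) (hVne : V.Nonempty) {ε : ℝ}
    (hε : ε < Metric.diam (Set.univ : Set X)) (N : ℕ) :
    ∃ y ∈ V, ∃ m : ℕ, N ≤ m ∧ ε < dist (f^[m] x) (f^[m] y) := by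
  obtain ⟨a, b, hab⟩ : ∃ a b : X, ε < dist a b := by
    by_contra hcon
    push_neg at hcon
    have h0 : 0 ≤ ε := by
      have := hcon (Classical.arbitrary X) (Classical.arbitrary X)
      simpa using this
    have : Metric.diam (Set.univ : Set X) ≤ ε :=
      Metric.diam_le_of_forall_dist_le h0 (fun u _ v _ => hcon u v)
    linarith
  set δ : ℝ := (dist a b - ε) / 2 with hδdef
  have hδ : 0 < δ := by simp [hδdef]; linarith
  have hsep : ∀ u ∈ Metric.ball a δ, ∀ v ∈ Metric.ball b δ, ε < dist u v := by
    intro u hu v hv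
    rw [Metric.mem_ball] at hu hv
    have h1 := dist_triangle a u b
    have h2 := dist_triangle u v b
    have h3 : dist u a = dist a u := dist_comm u a
    have h4 : dist v b = dist b v := dist_comm v b
    nlinarith [dist_triangle a u v, dist_triangle u v b, dist_comm v b, dist_comm u a]
  obtain ⟨K, hK⟩ := lyap_syndetic f hf hmin x (Metric.isOpen_ball (x := a) (ε := δ))
    ⟨a, Metric.mem_ball_self hδ⟩
  obtain ⟨n, hn⟩ := lyap_run_hitting f hf (lyap_surj f hf hmin) hwm
    (lyap_transitive f hmin) hVo hVne (Metric.isOpen_ball (x := b) (ε := δ))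
    ⟨b, Metric.mem_ball_self hδ⟩ (N + K)
  set s : ℕ := max n N with hs
  have hs1 : n ≤ s := le_max_left n N
  have hs2 : N ≤ s := le_max_right n N
  have hs3 : s ≤ n + N := max_le (Nat.le_add_right n N) (Nat.le_add_left N n)
  obtain ⟨j, hjK, hjA⟩ := hK s
  obtain ⟨y, hyV, hyB⟩ := hn (s - n + j) (by omega)
  have hidx : n + (s - n + j) = s + j := by omega
  rw [hidx] at hyB
  exact ⟨y, hyV, s + j, by omega, hsep _ hjA _ hyB⟩

end LyapunovAux
section LyapunovAux2

open Filter Topology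

variable {X : Type*} [MetricSpace X]

lemma lyap_limsupDist_le [CompactSpace X] (f : X → X) (x y : X) :
    limsupDist f x y ≤ Metric.diam (Set.univ : Set X) := by
  refine limsup_le_of_le ?_ (Eventually.of_forall fun n =>
    Metric.dist_le_diam_of_mem isCompact_univ.isBounded (Set.mem_univ _) (Set.mem_univ _))
  exact (isBoundedUnder_of ⟨0, fun n => dist_nonneg⟩ :
    IsBoundedUnder (· ≥ ·) atTop fun n => dist (f^[n] x) (f^[n] y)).isCoboundedUnder_le

lemma lyap_exists_of_lt_limsup (f : X → X) (x y : X) {ε : ℝ}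
    (h : ε < limsupDist f x y) (N : ℕ) :
    ∃ n : ℕ, N ≤ n ∧ ε < dist (f^[n] x) (f^[n] y) := by
  by_contra hc
  push_neg at hc
  have : limsupDist f x y ≤ ε := by
    refine limsup_le_of_le ?_ (eventually_atTop.2 ⟨N, fun n hn => hc n hn⟩)
    exact (isBoundedUnder_of ⟨0, fun n => dist_nonneg⟩ :
      IsBoundedUnder (· ≥ ·) atTop fun n => dist (f^[n] x) (f^[n] y)).isCoboundedUnder_le
  linarith

/-- Baire category upgrade of `lyap_key`: limsup separation on a dense set. -/
lemma lyap_limsup_key [CompactSpace X] [Nonempty X] (f : X → X) (hf : Continuous f)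
    (hmin : ∀ x : X, TransitivePoint f x) (hwm : WeaklyMixing f)
    (x : X) {U : Set X} (hUo : IsOpen U) (hUne : U.Nonempty) {ε : ℝ}
    (hε : ε < Metric.diam (Set.univ : Set X)) :
    ∃ y ∈ U, ε < limsupDist f x y := by
  obtain ⟨ε', hεε', hε'd⟩ := exists_between hε
  set D : ℕ → Set X := fun N =>
    ⋃ n : ℕ, ⋃ (_ : N ≤ n), {y : X | ε' < dist (f^[n] x) (f^[n] y)} with hD
  have hDo : ∀ N, IsOpen (D N) := fun N =>
    isOpen_iUnion fun n => isOpen_iUnion fun _ =>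
      isOpen_lt continuous_const (continuous_const.dist (hf.iterate n))
  have hDd : ∀ N, Dense (D N) := by
    intro N
    rw [dense_iff_inter_open]
    intro V hVo hVne
    obtain ⟨y, hyV, m, hm, hdist⟩ := lyap_key f hf hmin hwm x hVo hVne hε'd N
    exact ⟨y, hyV, Set.mem_iUnion₂.2 ⟨m, hm, hdist⟩⟩
  have hG : Dense (⋂ N, D N) := dense_iInter_of_isOpen hDo hDd
  obtain ⟨y, hyU, hyG⟩ := hG.inter_open_nonempty U hUo hUne
  refine ⟨y, hyU, lt_of_lt_of_le hεε' ?_⟩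
  refine le_limsup_of_frequently_le ?_ (isBoundedUnder_of
    ⟨Metric.diam (Set.univ : Set X), fun n =>
      Metric.dist_le_diam_of_mem isCompact_univ.isBounded (Set.mem_univ _) (Set.mem_univ _)⟩)
  rw [frequently_atTop]
  intro N
  obtain ⟨n, hn, hd⟩ := Set.mem_iUnion₂.1 (Set.mem_iInter.1 hyG N)
  exact ⟨n, hn, le_of_lt hd⟩

lemma lyap_sSup_eq {S : Set ℝ} {d : ℝ} (hd : 0 ≤ d) (hub : ∀ ε ∈ S, ε ≤ d)
    (hlb : ∀ ε < d, ε ∈ S) : sSup S = d := by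
  apply le_antisymm (Real.sSup_le hub hd)
  by_contra h
  push_neg at h
  obtain ⟨ε, h1, h2⟩ := exists_between h
  exact absurd (le_csSup ⟨d, fun z hz => hub z hz⟩ (hlb ε h2)) (not_le.2 h1)

end LyapunovAux2
/-- For a weakly mixing minimal system all four Lyapunov numbers equal `diam X`. -/
theorem stmt13 [CompactSpace X] (f : X → X) (hf : Continuous f)
    (hmin : ∀ x : X, TransitivePoint f x) (hwm : WeaklyMixing f) :
    Lr f = Metric.diam (Set.univ : Set X) ∧
    Lrbar f = Metric.diam (Set.univ : Set X) ∧
    Ld f = Metric.diam (Set.univ : Set X) ∧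
    Ldbar f = Metric.diam (Set.univ : Set X) := by
  rcases isEmpty_or_nonempty X with hE | hN
  · have hXe : (Set.univ : Set X) = ∅ := Set.univ_eq_empty_iff.2 hE
    have hd : Metric.diam (Set.univ : Set X) = 0 := by rw [hXe, Metric.diam_empty]
    have hz : ∀ S : Set ℝ, S = Set.univ → sSup S = Metric.diam (Set.univ : Set X) := by
      intro S hS
      rw [hS, Real.sSup_univ, hd]
    refine ⟨hz _ ?_, hz _ ?_, hz _ ?_, hz _ ?_⟩
    · exact Set.eq_univ_iff_forall.2 fun ε x => (IsEmpty.false x).elim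
    · exact Set.eq_univ_iff_forall.2 fun ε x => (IsEmpty.false x).elim
    · exact Set.eq_univ_iff_forall.2 fun ε U _ h => (IsEmpty.false h.choose).elim
    · exact Set.eq_univ_iff_forall.2 fun ε U _ h => (IsEmpty.false h.choose).elim
  · set d : ℝ := Metric.diam (Set.univ : Set X) with hddef
    have hd0 : 0 ≤ d := Metric.diam_nonneg
    have hdist_le : ∀ u v : X, dist u v ≤ d := fun u v =>
      Metric.dist_le_diam_of_mem isCompact_univ.isBounded (Set.mem_univ u) (Set.mem_univ v)
    refine ⟨?_, ?_, ?_, ?_⟩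
    · rw [Lr]
      refine lyap_sSup_eq hd0 (fun ε hε => ?_) (fun ε hε x U hU => ?_)
      · obtain ⟨y, -, n, hn⟩ := hε (Classical.arbitrary X) Set.univ Filter.univ_mem
        exact le_of_lt (lt_of_lt_of_le hn (hdist_le _ _))
      · obtain ⟨V, hVU, hVo, hxV⟩ := mem_nhds_iff.1 hU
        obtain ⟨y, hyV, hl⟩ := lyap_limsup_key f hf hmin hwm x hVo ⟨x, hxV⟩ hε
        obtain ⟨n, -, hn⟩ := lyap_exists_of_lt_limsup f x y hl 0
        exact ⟨y, hVU hyV, n, hn⟩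
    · rw [Lrbar]
      refine lyap_sSup_eq hd0 (fun ε hε => ?_) (fun ε hε x U hUo hxU => ?_)
      · obtain ⟨y, -, hn⟩ := hε (Classical.arbitrary X) Set.univ isOpen_univ
          (Set.mem_univ _)
        exact le_of_lt (lt_of_lt_of_le hn (lyap_limsupDist_le f _ _))
      · exact lyap_limsup_key f hf hmin hwm x hUo ⟨x, hxU⟩ hε
    · rw [Ld]
      refine lyap_sSup_eq hd0 (fun ε hε => ?_) (fun ε hε U hUo hUne => ?_)
      · obtain ⟨x, -, y, -, n, -, hn⟩ := hε Set.univ isOpen_univ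
          (Set.univ_nonempty)
        exact le_of_lt (lt_of_lt_of_le hn (hdist_le _ _))
      · obtain ⟨x, hxU⟩ := hUne
        obtain ⟨y, hyU, hl⟩ := lyap_limsup_key f hf hmin hwm x hUo ⟨x, hxU⟩ hε
        obtain ⟨n, hn1, hn⟩ := lyap_exists_of_lt_limsup f x y hl 1
        exact ⟨x, hxU, y, hyU, n, hn1, hn⟩
    · rw [Ldbar]
      refine lyap_sSup_eq hd0 (fun ε hε => ?_) (fun ε hε U hUo hUne => ?_)
      · obtain ⟨x, -, y, -, hn⟩ := hε Set.univ isOpen_univ Set.univ_nonempty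
        exact le_of_lt (lt_of_lt_of_le hn (lyap_limsupDist_le f _ _))
      · obtain ⟨x, hxU⟩ := hUne
        obtain ⟨y, hyU, hl⟩ := lyap_limsup_key f hf hmin hwm x hUo ⟨x, hxU⟩ hε
        exact ⟨x, hxU, y, hyU, hl⟩
end

section
/- If (X,f) is a transitive dynamical system on a compact metric space that is not minimal, then the set of non-transitive points is dense in X. -/
open Filter Topology

variable {X : Type*} [MetricSpace X]

private lemma transPoint_of_iterate {f : X → X} {x : X} (s : ℕ)
    (h : TransitivePoint f (f^[s] x)) : TransitivePoint f x := by
  refine Dense.mono ?_ h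
  rintro _ ⟨n, rfl⟩
  exact ⟨n + s, (Function.iterate_add_apply f n s x)⟩

private lemma all_trans_of_isolated {f : X → X} (hf : Continuous f)
    (htrans : TopTransitive f) {a : X} (ha : IsOpen ({a} : Set X)) (y : X) :
    TransitivePoint f y := by
  have htr_a : TransitivePoint f a := by
    rw [TransitivePoint, dense_iff_inter_open]
    intro V hVo hVne
    obtain ⟨n, p, hpU, hpV⟩ := htrans {a} V ha ⟨a, rfl⟩ hVo hVne
    rw [Set.mem_singleton_iff] at hpU
    subst hpU
    exact ⟨f^[n] p, hpV, ⟨n, rfl⟩⟩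
  by_cases hXa : ∀ w : X, w = a
  · have : y = a := hXa y
    intro x
    have hx : x = y := (hXa x).trans this.symm
    exact hx ▸ subset_closure ⟨0, rfl⟩
  · push_neg at hXa
    obtain ⟨w, hw⟩ := hXa
    set S := closure (Set.range fun n : ℕ => f^[n] (f a)) with hSdef
    have hmapsto : Set.MapsTo f S S := by
      have h0 : Set.MapsTo f (Set.range fun n : ℕ => f^[n] (f a))
          (Set.range fun n : ℕ => f^[n] (f a)) := by
        rintro _ ⟨n, rfl⟩
        refine ⟨n + 1, ?_⟩
        show f^[n + 1] (f a) = f (f^[n] (f a))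
        rw [Function.iterate_succ_apply']
      exact h0.closure hf
    have hiter : ∀ n : ℕ, Set.MapsTo f^[n] S S := fun n => hmapsto.iterate n
    have hcov : ∀ x : X, x ∈ ({a} : Set X) ∪ S := by
      intro x
      have hx : x ∈ closure (Set.range fun n : ℕ => f^[n] a) := htr_a x
      have hsub : (Set.range fun n : ℕ => f^[n] a) ⊆
          {a} ∪ (Set.range fun n : ℕ => f^[n] (f a)) := by
        rintro _ ⟨n, rfl⟩
        cases n with
        | zero => exact Or.inl rfl
        | succ m => exact Or.inr ⟨m, (Function.iterate_succ_apply f m a).symm⟩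
      have := closure_mono hsub hx
      rwa [closure_union, closure_singleton] at this
    have haS : a ∈ S := by
      by_contra haS
      have hSeq : S = ({a} : Set X)ᶜ := by
        apply Set.eq_of_subset_of_subset
        · intro s hs hsa
          rw [Set.mem_singleton_iff] at hsa
          exact haS (hsa ▸ hs)
        · intro x hx
          rcases hcov x with h | h
          · exact absurd h hx
          · exact h
      have hSopen : IsOpen S := by
        rw [hSeq]; exact isClosed_singleton.isOpen_compl
      have hwS : w ∈ S := by
        rcases hcov w with h | h
        · exact absurd h hw
        · exact h
      obtain ⟨n, p, hpS, hpa⟩ := htrans S {a} hSopen ⟨w, hwS⟩ ha ⟨a, rfl⟩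
      have hfn : f^[n] p ∈ S := hiter n hpS
      rw [Set.mem_preimage, Set.mem_singleton_iff] at hpa
      exact haS (hpa ▸ hfn)
    obtain ⟨y', hy'a, m, hm⟩ := mem_closure_iff.mp haS {a} ha rfl
    rw [Set.mem_singleton_iff] at hy'a
    have hp : f^[m + 1] a = a := by
      rw [Function.iterate_succ_apply]
      simp only at hm
      rw [hm, hy'a]
    have hper : ∀ k t : ℕ, f^[k + t * (m + 1)] a = f^[k] a := by
      intro k t
      induction t with
      | zero => simp
      | succ u ih =>
        have he : k + (u + 1) * (m + 1) = (k + u * (m + 1)) + (m + 1) := by ring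
        rw [he, Function.iterate_add_apply, hp, ih]
    have hfin : (Set.range fun n : ℕ => f^[n] a).Finite := by
      have hsub : (Set.range fun n : ℕ => f^[n] a) ⊆
          (fun j => f^[j] a) '' (Set.Iio (m + 1)) := by
        rintro _ ⟨k, rfl⟩
        refine ⟨k % (m + 1), Nat.mod_lt _ (Nat.succ_pos m), ?_⟩
        show f^[k % (m+1)] a = f^[k] a
        conv_rhs => rw [show k = k % (m + 1) + (k / (m + 1)) * (m + 1) from
          (Nat.mod_add_div' k (m + 1)).symm]
        exact (hper _ _).symm
      exact ((Set.finite_Iio _).image _).subset hsub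
    have hy : y ∈ Set.range fun n : ℕ => f^[n] a := by
      have h1 : y ∈ closure (Set.range fun n : ℕ => f^[n] a) := htr_a y
      rwa [hfin.isClosed.closure_eq] at h1
    obtain ⟨j, hj⟩ := hy
    refine Dense.mono ?_ htr_a
    rintro _ ⟨k, rfl⟩
    refine ⟨k + j * m, ?_⟩
    show f^[k + j * m] y = f^[k] a
    have hj' : f^[j] a = y := hj
    rw [← hj', ← Function.iterate_add_apply]
    have he : k + j * m + j = k + j * (m + 1) := by ring
    rw [he]
    exact hper k j

/-- For a transitive non-minimal system, the non-transitive points are dense. -/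
theorem stmt14 [CompactSpace X] (f : X → X) (hf : Continuous f)
    (htrans : TopTransitive f) (hnotmin : ¬ ∀ x : X, TransitivePoint f x) :
    Dense {x : X | ¬ TransitivePoint f x} := by
  obtain ⟨z, hz⟩ := not_forall.mp hnotmin
  by_contra hnd
  rw [dense_iff_inter_open] at hnd
  push_neg at hnd
  obtain ⟨U, hUo, hUne, hU⟩ := hnd
  have hUT : ∀ y ∈ U, TransitivePoint f y := by
    intro y hy
    by_contra h
    exact Set.eq_empty_iff_forall_notMem.mp hU y ⟨hy, h⟩
  by_cases hiso : ∃ a : X, IsOpen ({a} : Set X)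
  · obtain ⟨a, ha⟩ := hiso
    exact hz (all_trans_of_isolated hf htrans ha z)
  · push_neg at hiso
    have hNB : ∀ x : X, (𝓝[≠] x).NeBot := fun x =>
      ⟨fun h => hiso x ((isOpen_singleton_iff_punctured_nhds x).mpr h)⟩
    obtain ⟨q0, hq0U⟩ := hUne
    obtain ⟨r, hr, hball⟩ := Metric.isOpen_iff.mp hUo q0 hq0U
    set U0 := Metric.ball q0 (r / 2) with hU0def
    have hU0o : IsOpen U0 := Metric.isOpen_ball
    have hq0 : q0 ∈ U0 := Metric.mem_ball_self (by linarith)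
    have hclU0 : closure U0 ⊆ U := by
      refine subset_trans ?_ hball
      exact subset_trans Metric.closure_ball_subset_closedBall
        (Metric.closedBall_subset_ball (by linarith))
    have hq : TransitivePoint f q0 := hUT q0 hq0U
    by_cases hsynd : ∃ L : ℕ, ∀ a : ℕ, f^[a] q0 ∈ U0 →
        ∃ j, 1 ≤ j ∧ j ≤ L ∧ f^[a + j] q0 ∈ U0
    · obtain ⟨L, hL⟩ := hsynd
      have hwin : ∀ m : ℕ, ∃ t, m ≤ t ∧ t ≤ m + L ∧ f^[t] q0 ∈ U0 := by
        intro m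
        induction m with
        | zero => exact ⟨0, le_refl 0, by omega, by simpa using hq0⟩
        | succ k ih =>
          obtain ⟨t, ht1, ht2, ht3⟩ := ih
          rcases Nat.lt_or_ge k t with h | h
          · exact ⟨t, h, by omega, ht3⟩
          · have htk : t = k := le_antisymm h ht1
            obtain ⟨j, hj1, hj2, hj3⟩ := hL t ht3
            exact ⟨t + j, by omega, by omega, hj3⟩
      have hcover : ∀ x : X, ∃ s : ℕ, f^[s] x ∈ closure U0 := by
        intro x
        set C : Set X := ⋃ s ∈ Set.Iic L, f^[s] ⁻¹' (closure U0) with hC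
        have hCclosed : IsClosed C := by
          apply Set.Finite.isClosed_biUnion (Set.finite_Iic L)
          intro s _
          exact isClosed_closure.preimage (hf.iterate s)
        have horb : (Set.range fun n : ℕ => f^[n] q0) ⊆ C := by
          rintro _ ⟨m, rfl⟩
          obtain ⟨t, ht1, ht2, ht3⟩ := hwin m
          refine Set.mem_biUnion (show t - m ∈ Set.Iic L by simp; omega) ?_
          show f^[t - m] (f^[m] q0) ∈ closure U0
          rw [← Function.iterate_add_apply]
          have he : t - m + m = t := by omega
          rw [he]
          exact subset_closure ht3
        have hxC : x ∈ C := hCclosed.closure_subset ((closure_mono horb) (hq x))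
        simp only [hC, Set.mem_iUnion, Set.mem_preimage] at hxC
        obtain ⟨s, _, hs⟩ := hxC
        exact ⟨s, hs⟩
      refine hz ?_
      obtain ⟨s, hs⟩ := hcover z
      exact transPoint_of_iterate s (hUT _ (hclU0 hs))
    · push_neg at hsynd
      choose a ha1 ha2 using hsynd
      obtain ⟨xs, φ, hφ, hlim⟩ := CompactSpace.tendsto_subseq (fun L => f^[a L] q0)
      have hx1 : xs ∈ closure U0 :=
        mem_closure_of_tendsto hlim (Filter.Eventually.of_forall fun k => ha1 (φ k))
      have hx2 : ∀ j : ℕ, 1 ≤ j → f^[j] xs ∉ U0 := by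
        intro j hj
        have hcl : IsClosed U0ᶜ := hU0o.isClosed_compl
        have htends : Filter.Tendsto (fun k => f^[j] (f^[a (φ k)] q0)) atTop (𝓝 (f^[j] xs)) :=
          ((hf.iterate j).continuousAt.tendsto).comp hlim
        have hmem : ∀ᶠ k in atTop, f^[j] (f^[a (φ k)] q0) ∈ U0ᶜ := by
          filter_upwards [eventually_ge_atTop j] with k hk
          have hnot : f^[a (φ k) + j] q0 ∉ U0 := ha2 (φ k) j hj (le_trans hk hφ.le_apply)
          intro hmem'
          apply hnot
          have he : f^[j] (f^[a (φ k)] q0) = f^[a (φ k) + j] q0 := by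
            rw [Nat.add_comm]
            exact (Function.iterate_add_apply f j (a (φ k)) q0).symm
          rwa [he] at hmem'
        exact hcl.mem_of_tendsto htends hmem
      have hxT : TransitivePoint f xs := hUT _ (hclU0 hx1)
      haveI := hNB xs
      have hdense : Dense ((Set.range fun n : ℕ => f^[n] xs) \ {xs}) :=
        Dense.diff_singleton hxT xs
      obtain ⟨y, hyU0, hyr⟩ := hdense.inter_open_nonempty U0 hU0o ⟨q0, hq0⟩
      obtain ⟨⟨n, hn⟩, hyne⟩ := hyr
      have hn' : f^[n] xs = y := hn
      rcases Nat.eq_zero_or_pos n with h0 | h1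
      · apply hyne
        rw [← hn', h0]
        rfl
      · exact hx2 n h1 (by rwa [hn'])
end
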